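/- arXiv:math/0307123 — 4 statements merged into one kernel-verified Lean document; each statement's English description precedes it below -/
import Mathlib

section
/- For δ ≥ 2 and m > δ, the graph K_δ ∨ N_m (the join of the complete graph on δ vertices with the edgeless graph on m vertices) is 2-connected, has minimum degree δ, is not Hamiltonian, and contains no cycle of length at least 2δ+1. -/
open SimpleGraph

/-- A graph is 2-connected: at least 3 vertices and deleting any one vertex
leaves a connected graph (no cut vertex). -/
def TwoConnected {V : Type*} [Fintype V] (G : SimpleGraph V) : Prop :=
  3 ≤ Fintype.card V ∧ ∀ v : V, (SimpleGraph.induce ({v}ᶜ : Set V) G).Connected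

/-- The join of a graph `H` on `Fin n` with the edgeless graph `N_m` on `Fin m`:
all edges of `H` together with all edges between the two sides. -/
def joinN {n : ℕ} (H : SimpleGraph (Fin n)) (m : ℕ) : SimpleGraph (Fin n ⊕ Fin m) where
  Adj a b :=
    match a, b with
    | .inl u, .inl v => H.Adj u v
    | .inl _, .inr _ => True
    | .inr _, .inl _ => True
    | .inr _, .inr _ => False
  symm := ⟨by rintro (u | u) (v | v) h <;> simp_all <;> exact h.symm⟩
  loopless := ⟨by rintro (u | u) h <;> simp_all⟩

instance {n m : ℕ} (H : SimpleGraph (Fin n)) [DecidableRel H.Adj] :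
    DecidableRel (joinN H m).Adj := by
  rintro (u | u) (v | v) <;> simp [joinN] <;> infer_instance

/-- Key counting lemma: every cycle in the join has length at most `2δ`. -/
lemma cycle_len_le {δ m : ℕ} (hδ : 1 ≤ δ) {u : Fin δ ⊕ Fin m}
    (c : (joinN (⊤ : SimpleGraph (Fin δ)) m).Walk u u) (hc : c.IsCycle) :
    c.length ≤ 2 * δ := by
  classical
  have hfst : (c.darts.map (·.fst)).Nodup := by
    rw [Walk.map_fst_darts]
    have htn : c.support.tail.Nodup := hc.support_nodup
    have h2 : c.support.getLast? = some u := by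
      rw [List.getLast?_eq_getLast (l := c.support) (by simp)]
      exact congrArg some c.getLast_support
    rcases ht : c.support.tail with _ | ⟨a, t'⟩
    · exfalso
      have h1 := c.length_support
      rw [c.support_eq_cons, ht] at h1
      have h3 := hc.three_le_length
      simp only [List.length_cons, List.length_nil] at h1
      omega
    · rw [c.support_eq_cons, ht] at h2
      rw [List.getLast?_cons_cons] at h2
      have h5 : (a :: t').dropLast ++ [u] = a :: t' :=
        List.dropLast_append_getLast? u h2
      rw [ht] at htn
      have hdrop : c.support.dropLast = u :: (a :: t').dropLast := by
        conv_lhs => rw [c.support_eq_cons, ht]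
        simp
      rw [hdrop, List.nodup_cons]
      refine ⟨?_, htn.sublist (List.dropLast_sublist _)⟩
      intro hu
      have h6 : (a :: t').Nodup := htn
      rw [← h5, List.nodup_append] at h6
      exact h6.2.2 u hu u (by simp) rfl
  have hsnd : (c.darts.map (·.snd)).Nodup := by
    rw [Walk.map_snd_darts]
    exact hc.support_nodup
  have hdn : c.darts.Nodup := hfst.of_map _
  -- the injection into `Fin δ × Bool`
  let f : (joinN (⊤ : SimpleGraph (Fin δ)) m).Dart → Fin δ × Bool := fun d =>
    match d.toProd.1, d.toProd.2 with
    | .inl a, _ => (a, true)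
    | .inr _, .inl b => (b, false)
    | .inr _, .inr _ => (⟨0, hδ⟩, false)
  have hinj : ∀ d₁ ∈ c.darts, ∀ d₂ ∈ c.darts, f d₁ = f d₂ → d₁ = d₂ := by
    intro d₁ h₁ d₂ h₂ hf
    have hadj1 := d₁.adj
    have hadj2 := d₂.adj
    obtain ⟨⟨x1, y1⟩, a1⟩ := d₁
    obtain ⟨⟨x2, y2⟩, a2⟩ := d₂
    rcases x1 with p1 | q1 <;> rcases x2 with p2 | q2
    · simp only [f] at hf
      have : p1 = p2 := by simpa using hf
      subst this
      exact List.inj_on_of_nodup_map hfst h₁ h₂ rfl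
    · rcases y2 with r2 | s2
      · simp [f] at hf
      · exact absurd a2 (by simp [joinN])
    · rcases y1 with r1 | s1
      · simp [f] at hf
      · exact absurd a1 (by simp [joinN])
    · rcases y1 with r1 | s1
      · rcases y2 with r2 | s2
        · simp only [f] at hf
          have : r1 = r2 := by simpa using hf
          subst this
          exact List.inj_on_of_nodup_map hsnd h₁ h₂ rfl
        · exact absurd a2 (by simp [joinN])
      · exact absurd a1 (by simp [joinN])
  have hcard : c.darts.toFinset.card ≤ Fintype.card (Fin δ × Bool) := by
    apply Finset.card_le_card_of_injOn f (fun d _ => Finset.mem_univ _)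
    intro d₁ h₁ d₂ h₂ hf
    exact hinj d₁ (List.mem_toFinset.mp h₁) d₂ (List.mem_toFinset.mp h₂) hf
  rw [List.toFinset_card_of_nodup hdn, Walk.length_darts] at hcard
  simpa [Fintype.card_prod, mul_comm] using hcard

/-- For δ ≥ 2 and m > δ, the join of the complete graph K_δ with the edgeless graph N_m
is 2-connected, has minimum degree δ, is not Hamiltonian, and has no cycle of length
at least 2δ+1. -/
theorem stmt_4 (δ m : ℕ) (hδ : 2 ≤ δ) (hm : δ < m) :
    TwoConnected (joinN (⊤ : SimpleGraph (Fin δ)) m) ∧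
    (joinN (⊤ : SimpleGraph (Fin δ)) m).minDegree = δ ∧
    ¬ (joinN (⊤ : SimpleGraph (Fin δ)) m).IsHamiltonian ∧
    ¬ ∃ (u : Fin δ ⊕ Fin m) (c : (joinN (⊤ : SimpleGraph (Fin δ)) m).Walk u u),
        c.IsCycle ∧ 2 * δ + 1 ≤ c.length := by
  classical
  set G := joinN (⊤ : SimpleGraph (Fin δ)) m with hG
  haveI : Nonempty (Fin δ ⊕ Fin m) := ⟨Sum.inr ⟨0, by omega⟩⟩
  have hcardV : Fintype.card (Fin δ ⊕ Fin m) = δ + m := by simp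
  -- degrees
  have hdegr : ∀ j : Fin m, G.degree (Sum.inr j) = δ := by
    intro j
    have hns : G.neighborFinset (Sum.inr j) =
        Finset.univ.map ⟨Sum.inl, Sum.inl_injective⟩ := by
      ext x
      rcases x with a | b <;> simp only [mem_neighborFinset] <;> simp [G, joinN]
    rw [← card_neighborFinset_eq_degree, hns, Finset.card_map, Finset.card_univ,
      Fintype.card_fin]
  have hdegl : ∀ a : Fin δ, δ ≤ G.degree (Sum.inl a) := by
    intro a
    rw [← card_neighborFinset_eq_degree]
    calc δ = (Finset.univ : Finset (Fin δ)).card := by simp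
    _ ≤ (G.neighborFinset (Sum.inl a)).card := by
        apply Finset.card_le_card_of_injOn (fun j => Sum.inr (Fin.castLE hm.le j))
        · intro j _
          rw [Finset.mem_coe, mem_neighborFinset]
          simp [G, joinN]
        · intro j₁ _ j₂ _ h
          simpa [Fin.ext_iff] using h
  refine ⟨⟨by omega, ?_⟩, ?_, ?_, ?_⟩
  · -- 2-connectedness
    intro v
    obtain ⟨a0, ha0⟩ : ∃ a0 : Fin δ, Sum.inl a0 ≠ v := by
      rcases v with a | j
      · by_cases h : (a : ℕ) = 0
        · exact ⟨⟨1, by omega⟩, by simp [Fin.ext_iff, h]⟩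
        · exact ⟨⟨0, by omega⟩, by simp [Fin.ext_iff]; omega⟩
      · exact ⟨⟨0, by omega⟩, by simp⟩
    have ha0' : Sum.inl a0 ∈ ({v}ᶜ : Set (Fin δ ⊕ Fin m)) := ha0
    have key : ∀ x (hx : x ∈ ({v}ᶜ : Set (Fin δ ⊕ Fin m))),
        (SimpleGraph.induce ({v}ᶜ : Set (Fin δ ⊕ Fin m)) G).Reachable
          ⟨x, hx⟩ ⟨Sum.inl a0, ha0'⟩ := by
      intro x hx
      rcases x with b | j
      · by_cases hb : b = a0
        · subst hb; exact Reachable.refl _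
        · have hadj : G.Adj (Sum.inl b) (Sum.inl a0) := by
            simp [G, joinN, hb]
          exact Adj.reachable hadj
      · have hadj : G.Adj (Sum.inr j) (Sum.inl a0) := by
          simp [G, joinN]
        exact Adj.reachable hadj
    haveI : Nonempty ({v}ᶜ : Set (Fin δ ⊕ Fin m)) := ⟨⟨Sum.inl a0, ha0'⟩⟩
    exact ⟨fun ⟨x, hx⟩ ⟨y, hy⟩ => (key x hx).trans (key y hy).symm⟩
  · -- minimum degree
    apply le_antisymm
    · calc G.minDegree ≤ G.degree (Sum.inr ⟨0, by omega⟩) := minDegree_le_degree _ _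
      _ = δ := hdegr _
    · apply le_minDegree_of_forall_le_degree
      intro v
      rcases v with a | j
      · exact hdegl a
      · exact (hdegr j).ge
  · -- not Hamiltonian
    intro h
    obtain ⟨a, p, hp⟩ := h (by rw [hcardV]; omega)
    have h1 : p.length = δ + m := by rw [hp.length_eq, hcardV]
    have h2 := cycle_len_le (by omega) p hp.isCycle
    omega
  · -- no long cycle
    rintro ⟨u, c, hc, hlen⟩
    have := cycle_len_le (by omega) c hc
    omega
end

section
/- Let G be a simple 2-connected non-Hamiltonian graph with minimum degree δ and exactly 2δ+1 vertices. Then G is isomorphic to H ∨ N_{δ+1} for some graph H on δ vertices. -/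
open SimpleGraph

set_option linter.unusedSectionVars false
set_option linter.unusedVariables false
set_option linter.unnecessarySeqFocus false
set_option maxHeartbeats 1000000

namespace AS
variable {V : Type*} [Fintype V] [DecidableEq V]
section withG
variable (G : SimpleGraph V)

def PF (m : ℕ) (w : ℕ → V) : Prop :=
  (∀ i < m, G.Adj (w i) (w (i+1))) ∧ (∀ i ≤ m, ∀ j ≤ m, w i = w j → i = j)

def HP (m : ℕ) (w : ℕ → V) : Prop :=
  PF G m w ∧ ∀ v : V, ∃ i ≤ m, w i = v





/-- Build a walk from a function `w : ℕ → V` with chain adjacency on `[0,m]`. -/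
def buildW (w : ℕ → V) : (m : ℕ) → (∀ i < m, G.Adj (w i) (w (i+1))) → G.Walk (w 0) (w m)
  | 0, _ => .nil
  | (m+1), h => (buildW w m (fun i hi => h i (by omega))).concat (h m (by omega))

lemma buildW_support (w : ℕ → V) (m : ℕ) (h : ∀ i < m, G.Adj (w i) (w (i+1))) :
    (buildW G w m h).support = (List.range (m+1)).map w := by
  induction m with
  | zero => simp [buildW, List.range_succ]
  | succ m ih =>
    rw [buildW, Walk.support_concat, ih]
    simp [List.range_succ]

lemma buildW_edges (w : ℕ → V) (m : ℕ) (h : ∀ i < m, G.Adj (w i) (w (i+1))) :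
    (buildW G w m h).edges = (List.range m).map (fun i => s(w i, w (i+1))) := by
  induction m with
  | zero => simp [buildW, Walk.edges_nil]
  | succ m ih =>
    rw [buildW, Walk.edges_concat, ih]
    simp [List.range_succ]

/-- From a "cyclic function" data, the graph is Hamiltonian. -/
lemma isHam_of_fn (w : ℕ → V) (m : ℕ) (h2 : 2 ≤ m)
    (hadj : ∀ i < m, G.Adj (w i) (w (i+1)))
    (hcl : G.Adj (w m) (w 0))
    (hinj : ∀ i ≤ m, ∀ j ≤ m, w i = w j → i = j)
    (hsurj : ∀ v : V, ∃ i ≤ m, w i = v) :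
    G.IsHamiltonian := by
  intro _
  have hnd : ((List.range (m+1)).map w).Nodup := by
    refine (List.nodup_map_iff_inj_on List.nodup_range).2 ?_
    intro i hi j hj hij
    simp only [List.mem_range] at hi hj
    exact hinj i (by omega) j (by omega) hij
  set p : G.Walk (w 0) (w m) := buildW G w m hadj with hp
  have hsup : p.support = (List.range (m+1)).map w := buildW_support G w m hadj
  have hpath : p.IsPath := Walk.IsPath.mk' (by rw [hsup]; exact hnd)
  have hedges : s(w m, w 0) ∉ p.edges := by
    rw [buildW_edges]
    intro hmem
    simp only [List.mem_map, List.mem_range] at hmem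
    obtain ⟨i, hi, heq⟩ := hmem
    rw [Sym2.eq_iff] at heq
    rcases heq with ⟨h1, h2'⟩ | ⟨h1, h2'⟩
    · have := hinj i (by omega) m le_rfl h1; omega
    · have := hinj i (by omega) 0 (by omega) h1
      have := hinj (i+1) (by omega) m (by omega) h2'
      omega
  set c : G.Walk (w m) (w m) := Walk.cons hcl p with hc
  have hcyc : c.IsCycle := (Walk.cons_isCycle_iff p hcl).2 ⟨hpath, hedges⟩
  refine ⟨w m, c, ?_⟩
  rw [Walk.isHamiltonianCycle_iff_isCycle_and_support_count_tail_eq_one]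
  refine ⟨hcyc, fun a => ?_⟩
  have : c.support = (w m) :: p.support := rfl
  rw [this]
  simp only [List.tail_cons]
  rw [hsup]
  apply List.count_eq_one_of_mem hnd
  obtain ⟨i, hi, rfl⟩ := hsurj a
  exact List.mem_map_of_mem (f := w) (List.mem_range.2 (by omega))

end withG
variable {G : SimpleGraph V}

lemma PF.adj {m w} (h : PF G m w) : ∀ i < m, G.Adj (w i) (w (i+1)) := h.1
lemma PF.inj {m w} (h : PF G m w) : ∀ i ≤ m, ∀ j ≤ m, w i = w j → i = j := h.2

lemma HP.pf {m w} (h : HP G m w) : PF G m w := h.1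
lemma HP.adj {m w} (h : HP G m w) : ∀ i < m, G.Adj (w i) (w (i+1)) := h.1.1
lemma HP.inj {m w} (h : HP G m w) : ∀ i ≤ m, ∀ j ≤ m, w i = w j → i = j := h.1.2
lemma HP.surj {m w} (h : HP G m w) : ∀ v : V, ∃ i ≤ m, w i = v := h.2

/-- reversal of a path function. -/
def revF (m : ℕ) (w : ℕ → V) : ℕ → V := fun i => w (m - i)

lemma revF_val (m : ℕ) (w : ℕ → V) (i : ℕ) : revF m w i = w (m - i) := rfl

lemma HP.rev {m w} (h : HP G m w) : HP G m (revF m w) := by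
  refine ⟨⟨fun i hi => ?_, fun i hi j hj hij => ?_⟩, fun v => ?_⟩
  · have := (h.adj (m - i - 1) (by omega)).symm
    have e1 : m - i - 1 + 1 = m - i := by omega
    have e2 : m - (i+1) = m - i - 1 := by omega
    rw [revF_val, revF_val, e2, ← e1]
    exact (h.adj (m - i - 1) (by omega)).symm
  · have := h.inj (m - i) (by omega) (m - j) (by omega) hij
    omega
  · obtain ⟨i, hi, rfl⟩ := h.surj v
    exact ⟨m - i, by omega, by rw [revF_val]; congr 1; omega⟩

/-- rotation: from `w 0 … w m` with `w 0 ~ w (j+1)`, the path `w j, w (j-1), …, w 0, w (j+1), …, w m`. -/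
def rotF (w : ℕ → V) (j : ℕ) : ℕ → V := fun i => if i ≤ j then w (j - i) else w i

lemma rotF_val_le (w : ℕ → V) {j i : ℕ} (h : i ≤ j) : rotF w j i = w (j - i) := if_pos h
lemma rotF_val_gt (w : ℕ → V) {j i : ℕ} (h : j < i) : rotF w j i = w i := if_neg (by omega)

lemma HP.rot {m w} (h : HP G m w) {j : ℕ} (hj : j < m) (hadj : G.Adj (w 0) (w (j+1))) :
    HP G m (rotF w j) := by
  refine ⟨⟨fun i hi => ?_, fun i hi j' hj' hij => ?_⟩, fun v => ?_⟩
  · rcases lt_trichotomy i j with hc | rfl | hc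
    · rw [rotF_val_le w (by omega), rotF_val_le w (by omega)]
      have e : j - i = (j - (i+1)) + 1 := by omega
      rw [e]
      exact (h.adj (j - (i+1)) (by omega)).symm
    · rw [rotF_val_le w le_rfl, rotF_val_gt w (by omega)]
      simpa using hadj
    · rw [rotF_val_gt w (by omega), rotF_val_gt w (by omega)]
      exact h.adj i hi
  · rcases le_or_gt i j with hc | hc <;> rcases le_or_gt j' j with hc' | hc'
    · rw [rotF_val_le w hc, rotF_val_le w hc'] at hij
      have := h.inj (j - i) (by omega) (j - j') (by omega) hij
      omega
    · rw [rotF_val_le w hc, rotF_val_gt w hc'] at hij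
      have := h.inj (j - i) (by omega) j' (by omega) hij
      omega
    · rw [rotF_val_gt w hc, rotF_val_le w hc'] at hij
      have := h.inj i (by omega) (j - j') (by omega) hij
      omega
    · rw [rotF_val_gt w hc, rotF_val_gt w hc'] at hij
      exact h.inj i (by omega) j' (by omega) hij
  · obtain ⟨i, hi, rfl⟩ := h.surj v
    rcases le_or_gt i j with hc | hc
    · exact ⟨j - i, by omega, by rw [rotF_val_le w (by omega)]; congr 1; omega⟩
    · exact ⟨i, hi, rotF_val_gt w hc⟩

/-- right rotation: from `w 0 … w m` with `w j ~ w m`, the path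
`w 0, …, w j, w m, w (m-1), …, w (j+1)`. -/
def rrotF (m : ℕ) (w : ℕ → V) (j : ℕ) : ℕ → V := fun i => if i ≤ j then w i else w (m + j + 1 - i)

lemma rrotF_val_le (m : ℕ) (w : ℕ → V) {j i : ℕ} (h : i ≤ j) : rrotF m w j i = w i := if_pos h
lemma rrotF_val_gt (m : ℕ) (w : ℕ → V) {j i : ℕ} (h : j < i) : rrotF m w j i = w (m + j + 1 - i) :=
  if_neg (by omega)

lemma HP.rrot {m w} (h : HP G m w) {j : ℕ} (hj : j < m) (hadj : G.Adj (w j) (w m)) :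
    HP G m (rrotF m w j) := by
  refine ⟨⟨fun i hi => ?_, fun i hi j' hj' hij => ?_⟩, fun v => ?_⟩
  · rcases lt_trichotomy i j with hc | hc | hc
    · rw [rrotF_val_le m w (by omega), rrotF_val_le m w (by omega)]
      exact h.adj i (by omega)
    · subst hc
      rw [rrotF_val_le m w le_rfl, rrotF_val_gt m w (by omega)]
      have e : m + i + 1 - (i+1) = m := by omega
      rw [e]; exact hadj
    · rw [rrotF_val_gt m w (by omega), rrotF_val_gt m w (by omega)]
      have e : m + j + 1 - i = (m + j + 1 - (i+1)) + 1 := by omega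
      rw [e]
      exact (h.adj (m + j + 1 - (i+1)) (by omega)).symm
  · rcases le_or_gt i j with hc | hc <;> rcases le_or_gt j' j with hc' | hc'
    · rw [rrotF_val_le m w hc, rrotF_val_le m w hc'] at hij
      exact h.inj i (by omega) j' (by omega) hij
    · rw [rrotF_val_le m w hc, rrotF_val_gt m w hc'] at hij
      have := h.inj i (by omega) (m + j + 1 - j') (by omega) hij
      omega
    · rw [rrotF_val_gt m w hc, rrotF_val_le m w hc'] at hij
      have := h.inj (m + j + 1 - i) (by omega) j' (by omega) hij
      omega
    · rw [rrotF_val_gt m w hc, rrotF_val_gt m w hc'] at hij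
      have := h.inj (m + j + 1 - i) (by omega) (m + j + 1 - j') (by omega) hij
      omega
  · obtain ⟨i, hi, rfl⟩ := h.surj v
    rcases le_or_gt i j with hc | hc
    · exact ⟨i, by omega, rrotF_val_le m w hc⟩
    · refine ⟨m + j + 1 - i, by omega, ?_⟩
      rw [rrotF_val_gt m w (by omega)]
      congr 1; omega


section withDec
variable [DecidableRel G.Adj]


variable {V : Type*} [Fintype V] [DecidableEq V] {G : SimpleGraph V} [DecidableRel G.Adj]


lemma PF.rrot {m : ℕ} {w : ℕ → V} (h : PF G m w) {j : ℕ} (hj : j < m)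
    (hadj : G.Adj (w j) (w m)) : PF G m (rrotF m w j) := by
  refine ⟨fun i hi => ?_, fun i hi j' hj' hij => ?_⟩
  · rcases lt_trichotomy i j with hc | hc | hc
    · rw [rrotF_val_le m w (by omega : i ≤ j), rrotF_val_le m w (by omega : i + 1 ≤ j)]
      exact h.adj i (by omega)
    · subst hc
      rw [rrotF_val_le m w le_rfl, rrotF_val_gt m w (by omega)]
      have e : m + i + 1 - (i+1) = m := by omega
      rw [e]; exact hadj
    · rw [rrotF_val_gt m w (by omega), rrotF_val_gt m w (by omega)]
      have e : m + j + 1 - i = (m + j + 1 - (i+1)) + 1 := by omega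
      rw [e]
      exact (h.adj (m + j + 1 - (i+1)) (by omega)).symm
  · rcases le_or_gt i j with hc | hc <;> rcases le_or_gt j' j with hc' | hc'
    · rw [rrotF_val_le m w hc, rrotF_val_le m w hc'] at hij
      exact h.inj i (by omega) j' (by omega) hij
    · rw [rrotF_val_le m w hc, rrotF_val_gt m w hc'] at hij
      have := h.inj i (by omega) (m + j + 1 - j') (by omega) hij
      omega
    · rw [rrotF_val_gt m w hc, rrotF_val_le m w hc'] at hij
      have := h.inj (m + j + 1 - i) (by omega) j' (by omega) hij
      omega
    · rw [rrotF_val_gt m w hc, rrotF_val_gt m w hc'] at hij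
      have := h.inj (m + j + 1 - i) (by omega) (m + j + 1 - j') (by omega) hij
      omega

/-- number of vertices bound for an injective path function. -/
lemma PF.card_le {m w} (h : PF G m w) : m + 1 ≤ Fintype.card V := by
  have hinj : Set.InjOn w ↑(Finset.range (m+1)) := by
    intro i hi j hj hij
    simp only [Finset.coe_range, Set.mem_Iio] at hi hj
    exact h.inj i (by omega) j (by omega) hij
  calc m + 1 = ((Finset.range (m+1)).image w).card := by
        rw [Finset.card_image_of_injOn hinj, Finset.card_range]
    _ ≤ Fintype.card V := Finset.card_le_univ _

lemma PF.surj_of_card {m w} (h : PF G m w) (hc : Fintype.card V = m + 1) :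
    ∀ v : V, ∃ i ≤ m, w i = v := by
  have hinj : Set.InjOn w ↑(Finset.range (m+1)) := by
    intro i hi j hj hij
    simp only [Finset.coe_range, Set.mem_Iio] at hi hj
    exact h.inj i (by omega) j (by omega) hij
  have hcard : ((Finset.range (m+1)).image w).card = Fintype.card V := by
    rw [Finset.card_image_of_injOn hinj, Finset.card_range, hc]
  have huniv : (Finset.range (m+1)).image w = Finset.univ := Finset.eq_univ_of_card _ hcard
  intro v
  have : v ∈ (Finset.range (m+1)).image w := huniv ▸ Finset.mem_univ v
  obtain ⟨i, hi, hiv⟩ := Finset.mem_image.1 this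
  exact ⟨i, by simpa using Nat.lt_succ_iff.mp (Finset.mem_range.1 hi), hiv⟩

/-- image of rrotF agrees with image of w -/
lemma rrotF_image (m : ℕ) (w : ℕ → V) (j : ℕ) (hj : j < m) :
    (Finset.range (m+1)).image (rrotF m w j) = (Finset.range (m+1)).image w := by
  apply Finset.Subset.antisymm <;> intro v hv <;>
    obtain ⟨i, hi, rfl⟩ := Finset.mem_image.1 hv <;>
    rw [Finset.mem_range] at hi <;> apply Finset.mem_image.2
  · rcases le_or_gt i j with hc | hc
    · exact ⟨i, Finset.mem_range.2 hi, (rrotF_val_le m w hc).symm⟩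
    · exact ⟨m + j + 1 - i, Finset.mem_range.2 (by omega), (rrotF_val_gt m w hc).symm⟩
  · rcases le_or_gt i j with hc | hc
    · exact ⟨i, Finset.mem_range.2 hi, rrotF_val_le m w hc⟩
    · refine ⟨m + j + 1 - i, Finset.mem_range.2 (by omega), ?_⟩
      rw [rrotF_val_gt m w (by omega)]
      congr 1; omega

/-- crossing an edge out of a finset along a walk -/
lemma exists_edge_out (s : Finset V) {a b : V} (p : G.Walk a b) (ha : a ∈ s) (hb : b ∉ s) :
    ∃ u ∈ s, ∃ y, y ∉ s ∧ G.Adj u y := by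
  induction p with
  | nil => exact absurd ha hb
  | @cons u v t h q ih =>
    by_cases hv : v ∈ s
    · exact ih hv hb
    · exact ⟨u, ha, v, hv, h⟩

/-- Existence of a Hamiltonian path. -/
lemma exists_HP (hnh : ¬ G.IsHamiltonian) (hconn : G.Connected) {δ : ℕ}
    (hcard : Fintype.card V = 2*δ+1) (hdeg : ∀ v, δ ≤ G.degree v) (hδ : 1 ≤ δ) :
    ∃ w, HP G (2*δ) w := by
  classical
  have hV : Nonempty V := Fintype.card_pos_iff.mp (by omega)
  obtain ⟨v0⟩ := hV
  set S : Finset ℕ := (Finset.range (Fintype.card V)).filter (fun m => ∃ w, PF G m w) with hS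
  have h0S : 0 ∈ S := by
    refine Finset.mem_filter.2 ⟨Finset.mem_range.2 (by omega), ⟨fun _ => v0, ?_, ?_⟩⟩
    · intro i hi; omega
    · intro i hi j hj _; omega
  have hSne : S.Nonempty := ⟨0, h0S⟩
  set L := S.max' hSne with hL
  obtain ⟨w, hw⟩ : ∃ w, PF G L w := (Finset.mem_filter.1 (S.max'_mem hSne)).2
  have hmax : ∀ w', ¬ PF G (L+1) w' := by
    intro w' hw'
    have hmem : L + 1 ∈ S := Finset.mem_filter.2 ⟨Finset.mem_range.2 (by
      have := hw'.card_le; omega), ⟨w', hw'⟩⟩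
    have := S.le_max' _ hmem
    omega
  -- all neighbors of endpoints are on the path
  have hnbr0 : ∀ v, G.Adj (w 0) v → ∃ i, 1 ≤ i ∧ i ≤ L ∧ w i = v := by
    intro v hv
    by_contra hno
    push_neg at hno
    apply hmax (fun i => if i = 0 then v else w (i-1))
    constructor
    · intro i hi
      rcases Nat.eq_zero_or_pos i with rfl | hpos
      · simpa using hv.symm
      · simp only [if_neg (by omega : ¬ i = 0), if_neg (by omega : ¬ i + 1 = 0)]
        have e : i + 1 - 1 = (i-1) + 1 := by omega
        rw [e]
        exact hw.adj (i-1) (by omega)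
    · intro i hi j hj hij
      have hvne : ∀ t ≤ L, v ≠ w t := by
        intro t htL heq
        rcases Nat.eq_zero_or_pos t with rfl | hpos
        · exact hv.ne' heq
        · exact (hno t hpos htL) heq.symm
      dsimp only at hij
      split_ifs at hij with h1 h2 h2
      · omega
      · exact absurd hij (hvne (j-1) (by omega))
      · exact absurd hij.symm (hvne (i-1) (by omega))
      · have := hw.inj (i-1) (by omega) (j-1) (by omega) hij
        omega
  have hnbrL : ∀ v, G.Adj (w L) v → ∃ i < L, w i = v := by
    intro v hv
    by_contra hno
    push_neg at hno
    apply hmax (fun i => if i ≤ L then w i else v)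
    have hvnot : ∀ i ≤ L, w i ≠ v := by
      intro i hiL heq
      rcases lt_or_eq_of_le hiL with hc | hc
      · exact (hno i hc) heq
      · subst hc; exact hv.ne' heq.symm
    constructor
    · intro i hi
      dsimp only
      split_ifs with h1 h2 h2
      · exact hw.adj i (by omega)
      · have : i = L := by omega
        subst this
        exact hv
      · omega
      · omega
    · intro i hi j hj hij
      dsimp only at hij
      split_ifs at hij with h1 h2 h2
      · exact hw.inj i h1 j h2 hij
      · exact absurd hij (hvnot i h1)
      · exact absurd hij.symm (hvnot j h2)
      · omega
  set A : Finset ℕ := (Finset.range L).filter (fun i => G.Adj (w 0) (w (i+1))) with hA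
  set B : Finset ℕ := (Finset.range L).filter (fun i => G.Adj (w L) (w i)) with hB
  have hAcard : δ ≤ A.card := by
    have hsub : G.neighborFinset (w 0) ⊆ A.image (fun i => w (i+1)) := by
      intro v hv
      rw [mem_neighborFinset] at hv
      obtain ⟨i, hi1, hiL, hiv⟩ := hnbr0 v hv
      refine Finset.mem_image.2 ⟨i - 1, Finset.mem_filter.2 ⟨Finset.mem_range.2 (by omega), ?_⟩, ?_⟩
      · rw [(by omega : i - 1 + 1 = i), hiv]; exact hv
      · rw [(by omega : i - 1 + 1 = i), hiv]
    calc δ ≤ G.degree (w 0) := hdeg _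
      _ = (G.neighborFinset (w 0)).card := rfl
      _ ≤ (A.image (fun i => w (i+1))).card := Finset.card_le_card hsub
      _ ≤ A.card := Finset.card_image_le
  have hBcard : δ ≤ B.card := by
    have hsub : G.neighborFinset (w L) ⊆ B.image w := by
      intro v hv
      rw [mem_neighborFinset] at hv
      obtain ⟨i, hiL, hiv⟩ := hnbrL v hv
      refine Finset.mem_image.2 ⟨i, Finset.mem_filter.2 ⟨Finset.mem_range.2 hiL, ?_⟩, hiv⟩
      rw [hiv]; exact hv
    calc δ ≤ G.degree (w L) := hdeg _
      _ ≤ (B.image w).card := Finset.card_le_card hsub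
      _ ≤ B.card := Finset.card_image_le
  by_cases hAB : (A ∩ B).Nonempty
  · obtain ⟨i, hi⟩ := hAB
    rw [Finset.mem_inter, hA, hB, Finset.mem_filter, Finset.mem_filter, Finset.mem_range] at hi
    obtain ⟨⟨hiL, hadj0⟩, _, hadjL⟩ := hi
    set C := rrotF L w i with hC
    have hCpf : PF G L C := hw.rrot hiL hadjL.symm
    have hclose : G.Adj (C L) (C 0) := by
      rw [hC, rrotF_val_gt L w (by omega), rrotF_val_le L w (by omega)]
      rw [(by omega : L + i + 1 - L = i + 1)]
      exact hadj0.symm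
    by_cases hspan : Fintype.card V = L + 1
    · exact absurd (isHam_of_fn G C L (by omega) hCpf.adj hclose hCpf.inj
        (hCpf.surj_of_card hspan)) hnh
    · have hlt : L + 1 < Fintype.card V := by
        have := hw.card_le; omega
      set P : Finset V := (Finset.range (L+1)).image w with hP
      have hPcard : P.card ≤ L + 1 := le_trans Finset.card_image_le (by simp)
      have hex : ∃ y, y ∉ P := by
        by_contra hall
        push_neg at hall
        have : Finset.univ ⊆ P := fun y _ => hall y
        have := Finset.card_le_card this
        simp only [Finset.card_univ] at this
        omega
      obtain ⟨y, hy⟩ := hex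
      have hw0P : w 0 ∈ P := Finset.mem_image.2 ⟨0, Finset.mem_range.2 (by omega), rfl⟩
      obtain ⟨pw⟩ := hconn.preconnected (w 0) y
      obtain ⟨u, huP, y', hy', hadj⟩ := exists_edge_out P pw hw0P hy
      -- u = C t0 for some t0 ≤ L
      have huC : u ∈ (Finset.range (L+1)).image C := by
        rw [hC, rrotF_image L w i hiL]; exact huP
      obtain ⟨t0, ht0, ht0u⟩ := Finset.mem_image.1 huC
      rw [Finset.mem_range] at ht0
      have ht0L : t0 ≤ L := by omega
      -- extended path
      set E : ℕ → V := fun t => if t = 0 then y' else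
        (if t ≤ L + 1 - t0 then C (t0 + t - 1) else C (t - (L + 2 - t0))) with hE
      have hCP : ∀ j ≤ L, C j ∈ P := by
        intro j hj
        have : C j ∈ (Finset.range (L+1)).image C :=
          Finset.mem_image.2 ⟨j, Finset.mem_range.2 (by omega), rfl⟩
        rwa [hC, rrotF_image L w i hiL] at this
      exfalso
      apply hmax E
      constructor
      · intro t ht
        rcases Nat.eq_zero_or_pos t with rfl | hpos
        · simp only [hE, if_pos rfl, if_neg (by omega : ¬ (1:ℕ) = 0),
            if_pos (by omega : 1 ≤ L + 1 - t0)]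
          rw [(by omega : t0 + 1 - 1 = t0), ht0u]
          exact hadj.symm
        · rcases lt_trichotomy t (L + 1 - t0) with hc | hc | hc
          · simp only [hE, if_neg (by omega : ¬ t = 0), if_neg (by omega : ¬ t + 1 = 0),
              if_pos (by omega : t ≤ L + 1 - t0), if_pos (by omega : t + 1 ≤ L + 1 - t0)]
            rw [(by omega : t0 + (t+1) - 1 = (t0 + t - 1) + 1)]
            exact hCpf.adj (t0 + t - 1) (by omega)
          · simp only [hE, if_neg (by omega : ¬ t = 0), if_neg (by omega : ¬ t + 1 = 0),
              if_pos (by omega : t ≤ L + 1 - t0), if_neg (by omega : ¬ t + 1 ≤ L + 1 - t0)]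
            rw [(by omega : t0 + t - 1 = L), (by omega : t + 1 - (L + 2 - t0) = 0)]
            · exact hclose
          · simp only [hE, if_neg (by omega : ¬ t = 0), if_neg (by omega : ¬ t + 1 = 0),
              if_neg (by omega : ¬ t ≤ L + 1 - t0), if_neg (by omega : ¬ t + 1 ≤ L + 1 - t0)]
            rw [(by omega : t + 1 - (L + 2 - t0) = (t - (L + 2 - t0)) + 1)]
            exact hCpf.adj (t - (L + 2 - t0)) (by omega)
      · intro t ht t' ht' htt
        have hyC : ∀ j ≤ L, y' ≠ C j := fun j hj h => hy' (h ▸ hCP j hj)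
        rcases Nat.eq_zero_or_pos t with rfl | hpt <;> rcases Nat.eq_zero_or_pos t' with rfl | hpt'
        · rfl
        · exfalso
          simp only [hE, if_pos rfl, if_neg (by omega : ¬ t' = 0)] at htt
          split at htt
          · exact hyC _ (by omega) htt
          · exact hyC _ (by omega) htt
        · exfalso
          simp only [hE, if_pos rfl, if_neg (by omega : ¬ t = 0)] at htt
          split at htt
          · exact hyC _ (by omega) htt.symm
          · exact hyC _ (by omega) htt.symm
        · simp only [hE, if_neg (by omega : ¬ t = 0), if_neg (by omega : ¬ t' = 0)] at htt
          rcases le_or_gt t (L + 1 - t0) with hc | hc <;> rcases le_or_gt t' (L + 1 - t0) with hc' | hc'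
          · rw [if_pos hc, if_pos hc'] at htt
            have := hCpf.inj (t0 + t - 1) (by omega) (t0 + t' - 1) (by omega) htt
            omega
          · rw [if_pos hc, if_neg (by omega : ¬ t' ≤ L + 1 - t0)] at htt
            have := hCpf.inj (t0 + t - 1) (by omega) (t' - (L + 2 - t0)) (by omega) htt
            omega
          · rw [if_pos hc', if_neg (by omega : ¬ t ≤ L + 1 - t0)] at htt
            have := hCpf.inj (t - (L + 2 - t0)) (by omega) (t0 + t' - 1) (by omega) htt
            omega
          · rw [if_neg (by omega : ¬ t ≤ L + 1 - t0), if_neg (by omega : ¬ t' ≤ L + 1 - t0)] at htt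
            have := hCpf.inj (t - (L + 2 - t0)) (by omega) (t' - (L + 2 - t0)) (by omega) htt
            omega
  · have hdisj : Disjoint A B := by
      rw [Finset.disjoint_iff_inter_eq_empty]
      exact Finset.not_nonempty_iff_eq_empty.1 hAB
    have hunion : A.card + B.card ≤ L := by
      calc A.card + B.card = (A ∪ B).card := (Finset.card_union_of_disjoint hdisj).symm
        _ ≤ (Finset.range L).card := Finset.card_le_card (by
            intro x hx
            rcases Finset.mem_union.1 hx with h | h
            · exact (Finset.mem_filter.1 h).1
            · exact (Finset.mem_filter.1 h).1)
        _ = L := Finset.card_range L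
    have hLcard : L = 2*δ := by
      have := hw.card_le
      omega
    have hw' : PF G (2*δ) w := by rw [← hLcard]; exact hw
    exact ⟨w, hw', hw'.surj_of_card (by omega)⟩




/-- inclusion hom from an induced subgraph -/
def inclHom (s : Set V) : (SimpleGraph.induce s G) →g G where
  toFun := Subtype.val
  map_rel' := fun h => h

lemma conn_of_twoConnected (h2 : TwoConnected G) (hdeg : ∀ v : V, 1 ≤ G.degree v) :
    G.Connected := by
  have hcard := h2.1
  have hne : Nonempty V := Fintype.card_pos_iff.mp (by omega)
  rw [connected_iff]
  refine ⟨fun u v => ?_, hne⟩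
  by_cases huv : u = v
  · exact huv ▸ Reachable.refl u
  · have : 0 < G.degree u := hdeg u
    rw [G.degree_pos_iff_exists_adj u] at this
    obtain ⟨y, hy⟩ := this
    have hyne : y ≠ u := hy.ne'
    by_cases hyv : y = v
    · exact hy.reachable.trans (hyv ▸ Reachable.refl y)
    · have hin : ∀ t : V, t ≠ u → t ∈ ({u}ᶜ : Set V) := fun t ht => by simp [ht]
      have hr := (h2.2 u).preconnected ⟨y, hin y hyne⟩ ⟨v, hin v (Ne.symm huv)⟩
      have hr2 : G.Reachable y v := by
        have := hr.map (inclHom ({u}ᶜ : Set V))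
        exact this
      exact (hy.reachable).trans hr2

/-- cut-vertex contradiction: `F` is a nonempty adjacency-closed (up to `v₀`) set missing some
vertex `z ≠ v₀`, so `v₀` is a cut vertex, contradicting 2-connectedness. -/
lemma cut_vertex_absurd (h2 : TwoConnected G) (v₀ : V) (F : Set V)
    {x z : V} (hx : x ∈ F) (hz : z ∉ F) (hxv : x ≠ v₀) (hzv : z ≠ v₀)
    (hcl : ∀ a ∈ F, ∀ b : V, G.Adj a b → b = v₀ ∨ b ∈ F) : False := by
  have hr := (h2.2 v₀).preconnected ⟨x, by simp [hxv]⟩ ⟨z, by simp [hzv]⟩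
  obtain ⟨p⟩ := hr
  set H := SimpleGraph.induce ({v₀}ᶜ : Set V) G with hH
  -- walk induction: from a vertex of F we can never reach z
  suffices h : ∀ (a b : ({v₀}ᶜ : Set V)) (p : H.Walk a b), (a : V) ∈ F → (b : V) ∉ F → False by
    exact h _ _ p hx hz
  intro a b p
  induction p with
  | nil => intro ha hb; exact hb ha
  | @cons u c t h q ih =>
    intro hu ht
    have hadj : G.Adj (u : V) (c : V) := h
    rcases hcl u hu c hadj with hc | hc
    · exact c.2 hc
    · exact ih hc ht


open Classical in
/-- set of starting points of Hamiltonian paths ending at `z`. -/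
noncomputable def UF (G : SimpleGraph V) (k : ℕ) (z : V) : Finset V :=
  Finset.univ.filter (fun v => ∃ w, HP G k w ∧ w k = z ∧ w 0 = v)

lemma mem_UF {k : ℕ} {z v : V} : v ∈ UF G k z ↔ ∃ w, HP G k w ∧ w k = z ∧ w 0 = v := by
  classical
  rw [UF]
  simp

variable {δ : ℕ}

lemma HP.end_nonadj (hnh : ¬ G.IsHamiltonian) (hδ : 1 ≤ δ) {w} (h : HP G (2*δ) w) :
    ¬ G.Adj (w 0) (w (2*δ)) := by
  intro hadj
  exact hnh (isHam_of_fn G w (2*δ) (by omega) h.adj hadj.symm h.inj h.surj)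

/-- The rigidity package. -/
lemma rigidity (hnh : ¬ G.IsHamiltonian) (hcard : Fintype.card V = 2*δ+1)
    (hdeg : ∀ v, δ ≤ G.degree v) (hδ : 1 ≤ δ) {w} (h : HP G (2*δ) w) :
    (UF G (2*δ) (w (2*δ))).card = δ ∧
    G.degree (w (2*δ)) = δ ∧
    (∀ v, v ∈ UF G (2*δ) (w (2*δ)) ↔ (v ≠ w (2*δ) ∧ ¬ G.Adj (w (2*δ)) v)) ∧
    (∀ i < 2*δ, (G.Adj (w 0) (w (i+1)) ↔ w i ∈ UF G (2*δ) (w (2*δ)))) := by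
  classical
  set k := 2*δ with hk
  set z := w k with hz
  set T : Finset V := Finset.univ \ (insert z (G.neighborFinset z)) with hT
  have hTcard : T.card = Fintype.card V - (G.degree z + 1) := by
    rw [hT, Finset.card_sdiff_of_subset (Finset.subset_univ _), Finset.card_univ,
      Finset.card_insert_of_notMem (by simp), card_neighborFinset_eq_degree]
  have hUT : UF G k z ⊆ T := by
    intro u hu
    obtain ⟨w', hw', hwk, hw0⟩ := mem_UF.1 hu
    have hne : u ≠ z := by
      intro he
      have := hw'.inj 0 (by omega) k (by omega) (by rw [hw0, hwk, he])
      omega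
    have hnadj : ¬ G.Adj z u := by
      intro hadj
      exact (hw'.end_nonadj hnh hδ) (by rw [hw0, hwk]; exact hadj.symm)
    rw [hT]
    simp only [Finset.mem_sdiff, Finset.mem_univ, true_and, Finset.mem_insert,
      mem_neighborFinset]
    push_neg
    exact ⟨hne, hnadj⟩
  set Fil : Finset ℕ := (Finset.range k).filter (fun i => G.Adj (w 0) (w (i+1))) with hFil
  set Pred : Finset V := Fil.image w with hPred
  have hPU : Pred ⊆ UF G k z := by
    intro u hu
    obtain ⟨i, hi, rfl⟩ := Finset.mem_image.1 hu
    rw [hFil, Finset.mem_filter, Finset.mem_range] at hi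
    obtain ⟨hik, hadj⟩ := hi
    have hr := h.rot hik hadj
    refine mem_UF.2 ⟨rotF w i, hr, ?_, ?_⟩
    · rw [rotF_val_gt w hik]
    · rw [rotF_val_le w (Nat.zero_le i), Nat.sub_zero]
  have hFilcard : Fil.card = G.degree (w 0) := by
    have himg : Fil.image (fun i => w (i+1)) = G.neighborFinset (w 0) := by
      apply Finset.Subset.antisymm
      · intro v hv
        obtain ⟨i, hi, rfl⟩ := Finset.mem_image.1 hv
        rw [hFil, Finset.mem_filter] at hi
        rw [mem_neighborFinset]
        exact hi.2
      · intro v hv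
        rw [mem_neighborFinset] at hv
        obtain ⟨i, hik, hiv⟩ := h.surj v
        have hi0 : i ≠ 0 := by
          intro he; rw [he] at hiv; exact hv.ne hiv
        refine Finset.mem_image.2 ⟨i-1, ?_, by rw [(by omega : i - 1 + 1 = i), hiv]⟩
        rw [hFil, Finset.mem_filter, Finset.mem_range]
        constructor
        · -- i - 1 < k : since w i is adjacent to w 0 it's not z = w k... need i ≤ k so i-1 < k
          omega
        · rw [(by omega : i - 1 + 1 = i), hiv]; exact hv
    have hinj1 : Set.InjOn (fun i => w (i+1)) ↑Fil := by
      intro i hi j hj hij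
      rw [hFil, Finset.coe_filter] at hi hj
      simp only [Set.mem_setOf_eq, Finset.mem_range] at hi hj
      have := h.inj (i+1) (by omega) (j+1) (by omega) hij
      omega
    rw [← card_neighborFinset_eq_degree, ← himg, Finset.card_image_of_injOn hinj1]
  have hPredcard : Pred.card = G.degree (w 0) := by
    have hinj2 : Set.InjOn w ↑Fil := by
      intro i hi j hj hij
      rw [hFil, Finset.coe_filter] at hi hj
      simp only [Set.mem_setOf_eq, Finset.mem_range] at hi hj
      exact h.inj i (by omega) j (by omega) hij
    rw [hPred, Finset.card_image_of_injOn hinj2, hFilcard]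
  -- the squeeze
  have hchain1 : δ ≤ Pred.card := hPredcard ▸ hdeg (w 0)
  have hchain2 : Pred.card ≤ (UF G k z).card := Finset.card_le_card hPU
  have hchain3 : (UF G k z).card ≤ T.card := Finset.card_le_card hUT
  have hdz : δ ≤ G.degree z := hdeg z
  have hTle : T.card ≤ δ := by omega
  have hUcard : (UF G k z).card = δ := by omega
  have hdegz : G.degree z = δ := by omega
  have hUeqT : UF G k z = T := Finset.eq_of_subset_of_card_le hUT (by omega)
  have hPredeq : Pred = UF G k z := Finset.eq_of_subset_of_card_le hPU (by omega)
  refine ⟨hUcard, hdegz, fun v => ?_, fun i hik => ?_⟩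
  · rw [hUeqT, hT]
    simp only [Finset.mem_sdiff, Finset.mem_univ, true_and, Finset.mem_insert,
      mem_neighborFinset]
    push_neg
    exact Iff.rfl
  · constructor
    · intro hadj
      apply hPU
      refine Finset.mem_image.2 ⟨i, ?_, rfl⟩
      rw [hFil, Finset.mem_filter, Finset.mem_range]
      exact ⟨hik, hadj⟩
    · intro hu
      rw [← hPredeq] at hu
      obtain ⟨j, hj, hji⟩ := Finset.mem_image.1 hu
      rw [hFil, Finset.mem_filter, Finset.mem_range] at hj
      have := h.inj j (by omega) i (by omega) hji
      subst this
      exact hj.2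


/-- Hamiltonicity from an index-reindexing of a Hamiltonian path. -/
lemma reindex_ham {k : ℕ} {w : ℕ → V} (hw : HP G k w) (hk : 2 ≤ k) (σ : ℕ → ℕ)
    (hσk : ∀ t ≤ k, σ t ≤ k)
    (hadjσ : ∀ t < k, G.Adj (w (σ t)) (w (σ (t+1))))
    (hclσ : G.Adj (w (σ k)) (w (σ 0)))
    (hinjσ : ∀ t ≤ k, ∀ t' ≤ k, σ t = σ t' → t = t') :
    G.IsHamiltonian := by
  classical
  apply isHam_of_fn G (fun t => w (σ t)) k hk hadjσ hclσ
  · intro i hi j hj hij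
    exact hinjσ i hi j hj (hw.inj _ (hσk i hi) _ (hσk j hj) hij)
  · -- surjectivity : σ maps [0,k] onto [0,k]
    have himg : (Finset.range (k+1)).image σ = Finset.range (k+1) := by
      apply Finset.eq_of_subset_of_card_le
      · intro x hx
        obtain ⟨t, ht, rfl⟩ := Finset.mem_image.1 hx
        rw [Finset.mem_range] at ht ⊢
        have := hσk t (by omega)
        omega
      · rw [Finset.card_range]
        rw [Finset.card_image_of_injOn]
        · rw [Finset.card_range]
        · intro a ha b hb hab
          rw [Finset.coe_range, Set.mem_Iio] at ha hb
          exact hinjσ a (by omega) b (by omega) hab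
    intro v
    obtain ⟨i, hik, rfl⟩ := hw.surj v
    have : i ∈ (Finset.range (k+1)).image σ := by
      rw [himg, Finset.mem_range]; omega
    obtain ⟨t, ht, rfl⟩ := Finset.mem_image.1 this
    exact ⟨t, by rw [Finset.mem_range] at ht; omega, rfl⟩


section bad
variable (hnh : ¬ G.IsHamiltonian) (hcard : Fintype.card V = 2*δ+1)
    (hdeg : ∀ v, δ ≤ G.degree v) (hδ : 1 ≤ δ)
    (hbad : ∀ w, HP G (2*δ) w → ¬ G.Adj (w 0) (w (2*δ-1)))

include hnh hcard hdeg hδ hbad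

/-- second vertex of any HP is in U -/
lemma snd_mem_U {w} (hw : HP G (2*δ) w) : w 1 ∈ UF G (2*δ) (w (2*δ)) := by
  have hrev := hw.rev
  have hb := hbad _ hrev
  rw [revF_val, revF_val, Nat.sub_zero, (by omega : 2*δ - (2*δ-1) = 1)] at hb
  have hmem := (rigidity hnh hcard hdeg hδ hw).2.2.1
  refine (hmem (w 1)).2 ⟨?_, hb⟩
  intro he
  have := hw.inj 1 (by omega) (2*δ) (by omega) he
  omega

/-- first-two twins: under (★), the first two vertices of any HP have the same
neighbours (apart from each other). -/
lemma first_two_twins {w} (hw : HP G (2*δ) w) :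
    ∀ y, y ≠ w 0 → y ≠ w 1 → (G.Adj (w 0) y ↔ G.Adj (w 1) y) := by
  set k := 2*δ with hk
  set z := w k with hz
  obtain ⟨-, -, hmem, hrig⟩ := rigidity hnh hcard hdeg hδ hw
  have hc1 : w 1 ∈ UF G k z := snd_mem_U hnh hcard hdeg hδ hbad hw
  have hadj02 : G.Adj (w 0) (w 2) := (hrig 1 (by omega)).2 hc1
  set w' := rotF w 1 with hw'd
  have hw' : HP G k w' := hw.rot (by omega) hadj02
  have hv0 : w' 0 = w 1 := by rw [hw'd, rotF_val_le w (by omega)]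
  have hvk : w' k = w k := by rw [hw'd, rotF_val_gt w (by omega)]
  have hv1 : w' 1 = w 0 := by rw [hw'd, rotF_val_le w (by omega)]
  have hvge : ∀ i, 2 ≤ i → w' i = w i := fun i hi => by rw [hw'd, rotF_val_gt w (by omega)]
  obtain ⟨-, -, -, hrig'⟩ := rigidity hnh hcard hdeg hδ hw'
  rw [hvk] at hrig'
  intro y hy0 hy1
  obtain ⟨j, hjk, rfl⟩ := hw.surj y
  have hj2 : 2 ≤ j := by
    rcases Nat.lt_or_ge j 2 with hc | hc
    · interval_cases j
      · exact absurd rfl hy0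
      · exact absurd rfl hy1
    · exact hc
  rcases eq_or_lt_of_le hj2 with hc | hc
  · -- j = 2
    rw [← hc]
    constructor
    · intro _
      have := (hrig' 1 (by omega)).2 (by rw [hv1]; exact (hmem (w 0)).2 ⟨by
          intro he
          have := hw.inj 0 (by omega) (2*δ) (by omega) he
          omega,
        fun ha => (hw.end_nonadj hnh hδ) ha.symm⟩)
      rw [hv0, hvge 2 (by omega)] at this
      exact this
    · intro _; exact hadj02
  · -- j ≥ 3
    have e1 : G.Adj (w 0) (w j) ↔ w (j-1) ∈ UF G k z := by
      have := hrig (j-1) (by omega)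
      rw [(by omega : j - 1 + 1 = j)] at this
      exact this
    have e2 : G.Adj (w 1) (w j) ↔ w (j-1) ∈ UF G k z := by
      have := hrig' (j-1) (by omega)
      rw [(by omega : j - 1 + 1 = j), hv0, hvge (j-1) (by omega), hvge j (by omega)] at this
      exact this
    rw [e1, e2]

/-- T2 twins: if `w j ∉ U` then `w (j+1)` and `w (j+2)` are twins. -/
lemma t2_twins {w} (hw : HP G (2*δ) w) {j : ℕ} (hj : j ≤ 2*δ - 2)
    (hnU : w j ∉ UF G (2*δ) (w (2*δ))) :
    ∀ y, y ≠ w (j+1) → y ≠ w (j+2) → (G.Adj (w (j+1)) y ↔ G.Adj (w (j+2)) y) := by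
  set k := 2*δ with hk
  set z := w k with hz
  obtain ⟨-, -, hmem, hrig⟩ := rigidity hnh hcard hdeg hδ hw
  have hzadj : G.Adj z (w j) := by
    by_contra hno
    exact hnU ((hmem (w j)).2 ⟨by
      intro he
      have := hw.inj j (by omega) k (by omega) he
      omega, hno⟩)
  set W := rrotF k w j with hWd
  have hW : HP G k W := hw.rrot (by omega) hzadj.symm
  have hWk : W k = w (j+1) := by
    rw [hWd, rrotF_val_gt k w (by omega)]
    congr 1; omega
  have hWk1 : W (k-1) = w (j+2) := by
    rw [hWd, rrotF_val_gt k w (by omega)]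
    congr 1; omega
  set R := revF k W with hRd
  have hR : HP G k R := hW.rev
  have hR0 : R 0 = w (j+1) := by rw [hRd, revF_val, Nat.sub_zero, hWk]
  have hR1 : R 1 = w (j+2) := by rw [hRd, revF_val]; exact hWk1
  intro y hy1 hy2
  have := first_two_twins hnh hcard hdeg hδ hbad hR y (by rw [hR0]; exact hy1)
    (by rw [hR1]; exact hy2)
  rw [hR0, hR1] at this
  exact this

/-- the bad case is impossible. -/
lemma bad_absurd (h2 : TwoConnected G) : False := by
  classical
  have hconn : G.Connected := conn_of_twoConnected h2 (fun v => le_trans hδ (hdeg v))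
  obtain ⟨w, hw⟩ := exists_HP hnh hconn hcard hdeg hδ
  set k := 2*δ with hk
  set z := w k with hz
  obtain ⟨hUcard, hdegz, hmem, hrig⟩ := rigidity hnh hcard hdeg hδ hw
  have hc0 : w 0 ∈ UF G k z := mem_UF.2 ⟨w, hw, rfl, rfl⟩
  have hc1 : w 1 ∈ UF G k z := snd_mem_U hnh hcard hdeg hδ hbad hw
  have hck1 : w (k-1) ∉ UF G k z := by
    intro hmem'
    have := (hrig (k-1) (by omega)).2 hmem'
    rw [(by omega : k - 1 + 1 = k)] at this
    exact (hw.end_nonadj hnh hδ) this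
  -- least index not in U
  have hex : ∃ j, j ≤ k - 1 ∧ w j ∉ UF G k z := ⟨k-1, le_rfl, hck1⟩
  obtain ⟨j0, hj0k, hj0U, hj0min⟩ :
      ∃ j0, j0 ≤ k - 1 ∧ w j0 ∉ UF G k z ∧ ∀ j < j0, w j ∈ UF G k z := by
    refine ⟨Nat.find hex, (Nat.find_spec hex).1, (Nat.find_spec hex).2, ?_⟩
    intro j hj
    by_contra hno
    have hle : j ≤ k - 1 := by
      have := (Nat.find_spec hex).1
      omega
    exact (Nat.find_min hex hj) ⟨hle, hno⟩
  have hj02 : 2 ≤ j0 := by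
    rcases Nat.lt_or_ge j0 2 with hc | hc
    · interval_cases j0
      · exact absurd hc0 hj0U
      · exact absurd hc1 hj0U
    · exact hc
  by_cases hexi : ∃ i, j0 < i ∧ i ≤ k - 1 ∧ w i ∈ UF G k z
  · -- twin chain contradiction
    have hexi' : ∃ i, (j0 < i ∧ i ≤ k - 1 ∧ w i ∈ UF G k z) := hexi
    obtain ⟨i, hij0, hik, hiU, himin⟩ :
        ∃ i, j0 < i ∧ i ≤ k - 1 ∧ w i ∈ UF G k z ∧
          ∀ t, j0 ≤ t → t < i → w t ∉ UF G k z := by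
      refine ⟨Nat.find hexi', (Nat.find_spec hexi').1, (Nat.find_spec hexi').2.1,
        (Nat.find_spec hexi').2.2, ?_⟩
      intro t ht1 ht2 hmem'
      rcases eq_or_lt_of_le ht1 with hc | hc
      · exact hj0U (by rw [hc]; exact hmem')
      · have ht3 : t ≤ k - 1 := by
          have := (Nat.find_spec hexi').2.1
          omega
        exact (Nat.find_min hexi' ht2) ⟨hc, ht3, hmem'⟩
    -- start : Adj (w 0) (w (i+1))
    have hstart : G.Adj (w 0) (w (i+1)) := (hrig i (by omega)).2 hiU
    -- downward chain
    have hchain : ∀ d, d ≤ i - j0 → G.Adj (w 0) (w (i + 1 - d)) := by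
      intro d
      induction d with
      | zero => intro _; simpa using hstart
      | succ d ih =>
        intro hd
        have hprev := ih (by omega)
        set t := i - 1 - d with htd
        have ht1 : j0 ≤ t := by omega
        have ht2 : t < i := by omega
        have htw := t2_twins hnh hcard hdeg hδ hbad hw (j := t) (by omega)
          (himin t ht1 ht2) (w 0)
          (by intro he; have := hw.inj 0 (by omega) (t+1) (by omega) he; omega)
          (by intro he; have := hw.inj 0 (by omega) (t+2) (by omega) he; omega)
        have : G.Adj (w (t+2)) (w 0) := by
          have e : t + 2 = i + 1 - d := by omega
          rw [e]; exact hprev.symm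
        have := (htw.2 this).symm
        have e2 : t + 1 = i + 1 - (d+1) := by omega
        rw [e2] at this
        exact this
    have := hchain (i - j0) le_rfl
    rw [(by omega : i + 1 - (i - j0) = j0 + 1)] at this
    exact hj0U ((hrig j0 (by omega)).1 this)
  · -- cut vertex contradiction
    push_neg at hexi
    have hnoU : ∀ t, j0 ≤ t → t ≤ k - 1 → w t ∉ UF G k z := by
      intro t ht1 ht2
      rcases eq_or_lt_of_le ht1 with hc | hc
      · exact hc ▸ hj0U
      · exact hexi t hc ht2
    set F : Set V := {v | ∃ s, s ≤ j0 - 1 ∧ w s = v} with hF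
    have hUpos : ∀ t ≤ k, w t ∈ UF G k z → t ≤ j0 - 1 := by
      intro t htk hmem'
      by_contra hno
      rcases eq_or_lt_of_le htk with hc | hc
      · -- t = k: z ∉ U
        have := (hmem (w t)).1 hmem'
        exact this.1 (by rw [hc])
      · exact (hnoU t (by omega) (by omega)) hmem'
    have hclF : ∀ a ∈ F, ∀ b : V, G.Adj a b → b = w j0 ∨ b ∈ F := by
      rintro a ⟨s, hs, rfl⟩ b hadj
      obtain ⟨ρ, hρk, rfl⟩ := hw.surj b
      rcases Nat.eq_zero_or_pos s with rfl | hs0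
      · -- s = 0
        have hρ0 : ρ ≠ 0 := by
          intro he
          exact hadj.ne (by rw [he])
        have hρk' : ρ ≠ k := by
          intro he
          rw [he] at hadj
          exact (hw.end_nonadj hnh hδ) hadj
        have : w (ρ-1) ∈ UF G k z := by
          have := (hrig (ρ-1) (by omega)).1
          rw [(by omega : ρ - 1 + 1 = ρ)] at this
          exact this hadj
        have := hUpos (ρ-1) (by omega) this
        rcases eq_or_lt_of_le (by omega : ρ ≤ j0) with hc | hc
        · exact Or.inl (by rw [hc])
        · exact Or.inr ⟨ρ, by omega, rfl⟩
      · -- s ≥ 1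
        have hcs : w s ∈ UF G k z := hj0min s (by omega)
        have hadj0s1 : G.Adj (w 0) (w (s+1)) := (hrig s (by omega)).2 hcs
        set w' := rotF w s with hw'd
        have hw' : HP G k w' := hw.rot (by omega) hadj0s1
        have hv0 : w' 0 = w s := by rw [hw'd, rotF_val_le w (by omega), Nat.sub_zero]
        have hvk : w' k = w k := by rw [hw'd, rotF_val_gt w (by omega)]
        obtain ⟨-, -, -, hrig'⟩ := rigidity hnh hcard hdeg hδ hw'
        rw [hvk] at hrig'
        -- index of b in w'
        obtain ⟨ρ', hρ'k, hb⟩ := hw'.surj (w ρ)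
        have hρ'0 : ρ' ≠ 0 := by
          intro he
          rw [he, hv0] at hb
          exact hadj.ne hb
        have hρ'k' : ρ' ≠ k := by
          intro he
          rw [he, hvk] at hb
          have hthis : ¬ G.Adj (w k) (w s) := ((hmem (w s)).1 hcs).2
          rw [hb] at hthis
          exact hthis hadj.symm
        have hmem' : w' (ρ'-1) ∈ UF G k z := by
          have := (hrig' (ρ'-1) (by omega)).1
          rw [(by omega : ρ' - 1 + 1 = ρ'), hv0, hb] at this
          exact this hadj
        -- now case on position of ρ'-1 relative to s
        rcases le_or_gt ρ' (s+1) with hc | hc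
        · -- b = w' ρ' with ρ' ≤ s + 1 : b = w (s - ρ') or w (s+1), all ≤ j0
          rcases eq_or_lt_of_le hc with hc2 | hc2
          · -- ρ' = s+1 : b = w (s+1), s+1 ≤ j0
            rw [hw'd, rotF_val_gt w (by omega)] at hb
            rcases eq_or_lt_of_le (by omega : s + 1 ≤ j0) with hc3 | hc3
            · left; rw [← hb, hc2, ← hc3]
            · right; exact ⟨ρ', by omega, by rw [← hb, hc2]⟩
          · -- ρ' ≤ s : b = w (s - ρ'), s - ρ' ≤ s - 1 ≤ j0 - 1
            rw [hw'd, rotF_val_le w (by omega)] at hb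
            right; exact ⟨s - ρ', by omega, hb⟩
        · -- ρ' ≥ s+2 : w' (ρ'-1) = w (ρ'-1) ∈ U so ρ'-1 ≤ j0-1, b = w ρ', ρ' ≤ j0
          rw [hw'd, rotF_val_gt w (by omega : s < ρ' - 1)] at hmem'
          have := hUpos (ρ'-1) (by omega) hmem'
          rw [hw'd, rotF_val_gt w (by omega : s < ρ')] at hb
          rcases eq_or_lt_of_le (by omega : ρ' ≤ j0) with hc3 | hc3
          · left; rw [← hb, hc3]
          · right; exact ⟨ρ', by omega, hb⟩
    exact cut_vertex_absurd h2 (w j0) F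
      (x := w 0) (z := w k)
      ⟨0, by omega, rfl⟩
      (by
        rintro ⟨s, hs, hsk⟩
        have := hw.inj s (by omega) k (by omega) hsk
        omega)
      (by
        intro he
        have := hw.inj 0 (by omega) j0 (by omega) he
        omega)
      (by
        intro he
        have := hw.inj k (by omega) j0 (by omega) he
        omega)
      hclF

end bad

section good
variable (hnh : ¬ G.IsHamiltonian) (hcard : Fintype.card V = 2*δ+1)
    (hdeg : ∀ v, δ ≤ G.degree v) (hδ : 1 ≤ δ)

include hnh hcard hdeg hδ

lemma good_indep {w} (hw : HP G (2*δ) w) (hcl : G.Adj (w 0) (w (2*δ - 1))) :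
    ∃ S : Finset V, S.card = δ + 1 ∧ ∀ a ∈ S, ∀ b ∈ S, ¬ G.Adj a b := by
  classical
  set k := 2*δ with hk
  set z := w k with hz
  obtain ⟨hUcard, hdegz, hmem, hrig⟩ := rigidity hnh hcard hdeg hδ hw
  set U := UF G k z with hU
  have hk2 : 2 ≤ k := by omega
  have hzU : z ∉ U := fun h => ((hmem z).1 h).1 rfl
  have hc0 : w 0 ∈ U := mem_UF.2 ⟨w, hw, rfl, rfl⟩
  have hzadj : ∀ t < k, w t ∉ U → G.Adj z (w t) := by
    intro t ht hnU
    by_contra hno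
    exact hnU ((hmem (w t)).2 ⟨by
      intro he
      have := hw.inj t (by omega) k (by omega) he
      omega, hno⟩)
  -- step 1 : no two consecutive non-U positions
  have step1 : ∀ j, j + 1 ≤ k - 1 → w j ∉ U → w (j+1) ∉ U → False := by
    intro j hjk hnU1 hnU2
    have ha1 : G.Adj z (w j) := hzadj j (by omega) hnU1
    have ha2 : G.Adj z (w (j+1)) := hzadj (j+1) (by omega) hnU2
    set σ : ℕ → ℕ := fun t => if t ≤ j then t else if t = j+1 then k else t-1 with hσ
    apply hnh
    apply reindex_ham hw hk2 σ
    · intro t ht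
      rw [hσ]; dsimp only; split_ifs <;> omega
    · intro t ht
      rcases lt_trichotomy t j with hc | hc | hc
      · rw [hσ]
        simp only [if_pos (by omega : t ≤ j), if_pos (by omega : t + 1 ≤ j)]
        exact hw.adj t (by omega)
      · subst hc
        rw [hσ]
        simp only [if_pos (le_refl t), if_neg (by omega : ¬ t + 1 ≤ t),
          if_pos (rfl : t + 1 = t + 1)]
        exact ha1.symm
      · rcases eq_or_lt_of_le (by omega : j + 1 ≤ t) with hc2 | hc2
        · rw [hσ]
          simp only [if_neg (by omega : ¬ t ≤ j), if_pos hc2.symm,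
            if_neg (by omega : ¬ t + 1 ≤ j), if_neg (by omega : ¬ t + 1 = j + 1)]
          rw [(by omega : t + 1 - 1 = j + 1)]
          exact ha2
        · rw [hσ]
          simp only [if_neg (by omega : ¬ t ≤ j), if_neg (by omega : ¬ t = j + 1),
            if_neg (by omega : ¬ t + 1 ≤ j), if_neg (by omega : ¬ t + 1 = j + 1)]
          rw [(by omega : t + 1 - 1 = (t - 1) + 1)]
          exact hw.adj (t-1) (by omega)
    · rw [hσ]
      simp only [if_neg (by omega : ¬ k ≤ j), if_neg (by omega : ¬ k = j + 1),
        if_pos (Nat.zero_le j)]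
      exact hcl.symm
    · intro t ht t' ht' htt
      rw [hσ] at htt
      dsimp only at htt
      split_ifs at htt <;> omega
  -- counting non-U positions
  set NU : Finset ℕ := (Finset.range k).filter (fun t => w t ∉ U) with hNU
  set UP : Finset ℕ := (Finset.range k).filter (fun t => w t ∈ U) with hUP
  have hNUcard : NU.card = δ := by
    have himg : NU.image w = G.neighborFinset z := by
      apply Finset.Subset.antisymm
      · intro v hv
        obtain ⟨t, htm, rfl⟩ := Finset.mem_image.1 hv
        rw [hNU, Finset.mem_filter, Finset.mem_range] at htm
        rw [mem_neighborFinset]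
        exact hzadj t htm.1 htm.2
      · intro v hv
        rw [mem_neighborFinset] at hv
        obtain ⟨t, htk, rfl⟩ := hw.surj v
        have htk' : t < k := by
          rcases eq_or_lt_of_le htk with hc | hc
          · exfalso
            rw [hc] at hv
            exact G.irrefl hv
          · exact hc
        refine Finset.mem_image.2 ⟨t, ?_, rfl⟩
        rw [hNU, Finset.mem_filter, Finset.mem_range]
        refine ⟨htk', fun hmem' => ?_⟩
        exact ((hmem (w t)).1 hmem').2 hv
    have hinj : Set.InjOn w ↑NU := by
      intro a ha b hb hab
      rw [hNU, Finset.coe_filter] at ha hb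
      simp only [Set.mem_setOf_eq, Finset.mem_range] at ha hb
      exact hw.inj a (by omega) b (by omega) hab
    rw [← Finset.card_image_of_injOn hinj, himg, card_neighborFinset_eq_degree]
    exact hdegz
  have hUPcard : UP.card = δ := by
    have hsub : NU ⊆ Finset.range k := by
      rw [hNU]; exact Finset.filter_subset _ _
    have hUPeq : UP = Finset.range k \ NU := by
      ext t
      simp only [hUP, hNU, Finset.mem_filter, Finset.mem_sdiff, Finset.mem_range]
      tauto
    rw [hUPeq, Finset.card_sdiff_of_subset hsub, Finset.card_range, hNUcard]
    omega
  -- successor bijection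
  set g : ℕ → ℕ := fun t => if t = k-1 then 0 else t+1 with hg
  have hgmap : ∀ t ∈ NU, g t ∈ UP := by
    intro t ht
    rw [hNU, Finset.mem_filter, Finset.mem_range] at ht
    rw [hg]; dsimp only
    split_ifs with hc
    · rw [hUP, Finset.mem_filter, Finset.mem_range]
      exact ⟨by omega, hc0⟩
    · rw [hUP, Finset.mem_filter, Finset.mem_range]
      refine ⟨by omega, ?_⟩
      by_contra hno
      exact step1 t (by omega) ht.2 hno
  have hginj : ∀ a ∈ NU, ∀ b ∈ NU, g a = g b → a = b := by
    intro a ha b hb hab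
    rw [hNU, Finset.mem_filter, Finset.mem_range] at ha hb
    rw [hg] at hab; dsimp only at hab
    split_ifs at hab <;> omega
  have hgsurj : ∀ b ∈ UP, ∃ a ∈ NU, g a = b := by
    have hcardle : UP.card ≤ NU.card := by omega
    have hsurj0 := Finset.surj_on_of_inj_on_of_card_le (s := NU) (t := UP) (f := fun t _ => g t)
      (fun t ht => hgmap t ht) (fun a₁ a₂ ha₁ ha₂ he => hginj a₁ ha₁ a₂ ha₂ he)
      hcardle
    intro b hb
    obtain ⟨a, ha, he⟩ := hsurj0 b hb
    exact ⟨a, ha, he.symm⟩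
  -- alternation
  have halt : ∀ t, t ≤ k - 1 → (w t ∈ U ↔ Even t) := by
    intro t
    induction t with
    | zero => intro _; simpa using hc0
    | succ t ih =>
      intro ht
      constructor
      · intro hmem'
        obtain ⟨a, ha, hga⟩ := hgsurj (t+1) (by
          rw [hUP, Finset.mem_filter, Finset.mem_range]
          exact ⟨by omega, hmem'⟩)
        rw [hNU, Finset.mem_filter, Finset.mem_range] at ha
        rw [hg] at hga; dsimp only at hga
        by_cases hc : a = k - 1
        · rw [if_pos hc] at hga
          omega
        · rw [if_neg hc] at hga
          have hat : a = t := by omega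
          rw [hat] at ha
          have : ¬ Even t := fun he => ha.2 ((ih (by omega)).2 he)
          rw [Nat.even_add_one]
          exact this
      · intro heven
        have hodd : ¬ Even t := by
          rw [Nat.even_add_one] at heven
          exact heven
        have htNU : t ∈ NU := by
          rw [hNU, Finset.mem_filter, Finset.mem_range]
          exact ⟨by omega, fun hmem' => hodd ((ih (by omega)).1 hmem')⟩
        have := hgmap t htNU
        rw [hg] at this; dsimp only at this
        rw [if_neg (by omega : ¬ t = k - 1)] at this
        rw [hUP, Finset.mem_filter] at this
        exact this.2
  -- independence of U
  have haux : ∀ i j, i < j → j ≤ k - 1 → w i ∈ U → w j ∈ U → ¬ G.Adj (w i) (w j) := by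
    intro i j hij hjk hiU hjU hadj
    have hieven : Even i := (halt i (by omega)).1 hiU
    have hjeven : Even j := (halt j (by omega)).1 hjU
    have hk1odd : ¬ Even (k-1) := by
      rcases hieven with ⟨a, _⟩
      have : Even k := ⟨δ, by omega⟩
      rcases this with ⟨b, hb⟩
      intro ⟨c, hc⟩
      omega
    have hjk2 : j ≤ k - 2 := by
      rcases eq_or_lt_of_le hjk with hc | hc
      · exact absurd (hc ▸ hjeven) hk1odd
      · omega
    have hi1 : w (i+1) ∉ U := by
      intro hmem'
      have := (halt (i+1) (by omega)).1 hmem'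
      rw [Nat.even_add_one] at this
      exact this hieven
    have hj1 : w (j+1) ∉ U := by
      intro hmem'
      have := (halt (j+1) (by omega)).1 hmem'
      rw [Nat.even_add_one] at this
      exact this hjeven
    have hai : G.Adj z (w (i+1)) := hzadj (i+1) (by omega) hi1
    have haj : G.Adj z (w (j+1)) := hzadj (j+1) (by omega) hj1
    set σ : ℕ → ℕ := fun t => if t ≤ i then t else if t ≤ j then j+i+1-t
      else if t = j+1 then k else t-1 with hσ
    apply hnh
    apply reindex_ham hw hk2 σ
    · intro t ht
      rw [hσ]; dsimp only; split_ifs <;> omega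
    · intro t ht
      rcases lt_trichotomy t i with hc | hc | hc
      · rw [hσ]
        simp only [if_pos (by omega : t ≤ i), if_pos (by omega : t + 1 ≤ i)]
        exact hw.adj t (by omega)
      · subst hc
        rw [hσ]
        simp only [if_pos (le_refl t), if_neg (by omega : ¬ t + 1 ≤ t),
          if_pos (by omega : t + 1 ≤ j)]
        rw [(by omega : j + t + 1 - (t+1) = j)]
        exact hadj
      · rcases lt_trichotomy t j with hc2 | hc2 | hc2
        · rw [hσ]
          simp only [if_neg (by omega : ¬ t ≤ i), if_pos (by omega : t ≤ j),
            if_neg (by omega : ¬ t + 1 ≤ i), if_pos (by omega : t + 1 ≤ j)]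
          rw [(by omega : j + i + 1 - t = (j + i + 1 - (t+1)) + 1)]
          exact (hw.adj (j + i + 1 - (t+1)) (by omega)).symm
        · rw [hσ]
          simp only [if_neg (by omega : ¬ t ≤ i), if_pos (by omega : t ≤ j),
            if_neg (by omega : ¬ t + 1 ≤ i), if_neg (by omega : ¬ t + 1 ≤ j),
            if_pos (by omega : t + 1 = j + 1)]
          rw [(by omega : j + i + 1 - t = i + 1)]
          exact hai.symm
        · rcases eq_or_lt_of_le (by omega : j + 1 ≤ t) with hc3 | hc3
          · rw [hσ]
            simp only [if_neg (by omega : ¬ t ≤ i), if_neg (by omega : ¬ t ≤ j),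
              if_pos hc3.symm, if_neg (by omega : ¬ t + 1 ≤ i),
              if_neg (by omega : ¬ t + 1 ≤ j), if_neg (by omega : ¬ t + 1 = j + 1)]
            rw [(by omega : t + 1 - 1 = j + 1)]
            exact haj
          · rw [hσ]
            simp only [if_neg (by omega : ¬ t ≤ i), if_neg (by omega : ¬ t ≤ j),
              if_neg (by omega : ¬ t = j + 1), if_neg (by omega : ¬ t + 1 ≤ i),
              if_neg (by omega : ¬ t + 1 ≤ j), if_neg (by omega : ¬ t + 1 = j + 1)]
            rw [(by omega : t + 1 - 1 = (t - 1) + 1)]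
            exact hw.adj (t-1) (by omega)
    · rw [hσ]
      simp only [if_neg (by omega : ¬ k ≤ i), if_neg (by omega : ¬ k ≤ j),
        if_neg (by omega : ¬ k = j + 1), if_pos (Nat.zero_le i)]
      rw [(by omega : k - 1 = 2*δ - 1)]
      exact hcl.symm
    · intro t ht t' ht' htt
      rw [hσ] at htt
      dsimp only at htt
      split_ifs at htt <;> omega
  -- the independent set
  refine ⟨insert z U, ?_, ?_⟩
  · rw [Finset.card_insert_of_notMem hzU, hUcard]
  · intro a ha b hb hadj
    rw [Finset.mem_insert] at ha hb
    rcases ha with rfl | ha <;> rcases hb with rfl | hb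
    · exact G.irrefl hadj
    · exact ((hmem b).1 hb).2 hadj
    · exact ((hmem a).1 ha).2 hadj.symm
    · obtain ⟨ia, hiak, rfl⟩ := hw.surj a
      obtain ⟨ib, hibk, rfl⟩ := hw.surj b
      have hiak' : ia ≤ k - 1 := by
        rcases eq_or_lt_of_le hiak with hc | hc
        · exact absurd (by rw [hc] : w ia = w (2*δ)) ((hmem _).1 ha).1
        · omega
      have hibk' : ib ≤ k - 1 := by
        rcases eq_or_lt_of_le hibk with hc | hc
        · exact absurd (by rw [hc] : w ib = w (2*δ)) ((hmem _).1 hb).1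
        · omega
      rcases lt_trichotomy ia ib with hc | hc | hc
      · exact haux ia ib hc hibk' ha hb hadj
      · rw [hc] at hadj
        exact G.irrefl hadj
      · exact haux ib ia hc hiak' hb ha hadj.symm

end good


lemma exists_indep (h2 : TwoConnected G) (hnh : ¬ G.IsHamiltonian)
    (hcard : Fintype.card V = 2*δ+1) (hdeg : ∀ v, δ ≤ G.degree v) (hδ : 1 ≤ δ) :
    ∃ S : Finset V, S.card = δ + 1 ∧ ∀ a ∈ S, ∀ b ∈ S, ¬ G.Adj a b := by
  by_cases hgood : ∃ w, HP G (2*δ) w ∧ G.Adj (w 0) (w (2*δ - 1))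
  · obtain ⟨w, hw, hcl⟩ := hgood
    exact good_indep hnh hcard hdeg hδ hw hcl
  · push_neg at hgood
    exact absurd (bad_absurd hnh hcard hdeg hδ hgood h2) id

end withDec
end AS

/-- Ali–Staton: a simple 2-connected non-Hamiltonian graph with minimum degree δ and
exactly 2δ+1 vertices is isomorphic to H ∨ N_{δ+1} for some graph H on δ vertices. -/
theorem stmt_9 {V : Type*} [Fintype V] [DecidableEq V] (G : SimpleGraph V) [DecidableRel G.Adj]
    (h2 : TwoConnected G) (hnh : ¬ G.IsHamiltonian)
    (hn : Fintype.card V = 2 * G.minDegree + 1) :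
    ∃ H : SimpleGraph (Fin G.minDegree),
      Nonempty (G ≃g joinN H (G.minDegree + 1)) := by
    classical
    set δ := G.minDegree with hδdef
    have hdeg : ∀ v, δ ≤ G.degree v := fun v => G.minDegree_le_degree v
    have hδ : 1 ≤ δ := by
      by_contra hno
      have : δ = 0 := by omega
      rw [this] at hn
      have := h2.1
      omega
    obtain ⟨S, hScard, hSind⟩ := AS.exists_indep h2 hnh hn hdeg hδ
    set A : Finset V := Finset.univ \ S with hA
    have hAcard : A.card = δ := by
      rw [hA, Finset.card_sdiff_of_subset (Finset.subset_univ S), Finset.card_univ, hn, hScard]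
      omega
    have hNS : ∀ s ∈ S, G.neighborFinset s = A := by
      intro s hs
      apply Finset.eq_of_subset_of_card_le ?_ ?_
      · intro v hv
        rw [mem_neighborFinset] at hv
        rw [hA, Finset.mem_sdiff]
        exact ⟨Finset.mem_univ v, fun hvS => hSind s hs v hvS hv⟩
      · rw [hAcard, card_neighborFinset_eq_degree]
        exact hdeg s
    have hSA : ∀ s ∈ S, ∀ a ∈ A, G.Adj s a := by
      intro s hs a ha
      rw [← mem_neighborFinset, hNS s hs]
      exact ha
    -- build the equivalence
    have hcard1 : Fintype.card {x // x ∈ A} = δ := by rw [Fintype.card_coe]; exact hAcard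
    have hcard2 : Fintype.card {x // ¬ x ∈ A} = δ + 1 := by
      have : Fintype.card {x // x ∈ S} = δ + 1 := by rw [Fintype.card_coe]; exact hScard
      rw [← this]
      apply Fintype.card_congr
      apply Equiv.subtypeEquivRight
      intro x
      rw [hA, Finset.mem_sdiff]
      simp
    set e1 : {x // x ∈ A} ≃ Fin δ := Fintype.equivFinOfCardEq hcard1 with he1
    set e2 : {x // ¬ x ∈ A} ≃ Fin (δ+1) := Fintype.equivFinOfCardEq hcard2 with he2
    set f : V ≃ (Fin δ ⊕ Fin (δ+1)) :=
      (Equiv.sumCompl (· ∈ A)).symm.trans (Equiv.sumCongr e1 e2) with hf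
    have hmemA : ∀ v : V, v ∉ S ↔ v ∈ A := by
      intro v
      rw [hA, Finset.mem_sdiff]
      simp
    have hfA : ∀ (v : V) (hv : v ∈ A), f v = Sum.inl (e1 ⟨v, hv⟩) := by
      intro v hv
      rw [hf]
      simp only [Equiv.trans_apply, Equiv.sumCompl_symm_apply_of_pos hv]
      rfl
    have hfS : ∀ (v : V) (hv : ¬ v ∈ A), f v = Sum.inr (e2 ⟨v, hv⟩) := by
      intro v hv
      rw [hf]
      simp only [Equiv.trans_apply, Equiv.sumCompl_symm_apply_of_neg hv]
      rfl
    set H : SimpleGraph (Fin δ) := SimpleGraph.comap (fun a : Fin δ => ((e1.symm a : {x // x ∈ A}) : V)) G with hH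
    refine ⟨H, ⟨⟨f, ?_⟩⟩⟩
    intro a b
    by_cases haA : a ∈ A <;> by_cases hbA : b ∈ A
    · rw [hfA a haA, hfA b hbA]
      show H.Adj (e1 ⟨a, haA⟩) (e1 ⟨b, hbA⟩) ↔ G.Adj a b
      rw [hH]
      simp only [comap_adj, Equiv.symm_apply_apply]
    · rw [hfA a haA, hfS b hbA]
      have hbS : b ∈ S := by rw [← hmemA] at hbA; exact not_not.mp (by simpa using hbA)
      constructor
      · intro _
        exact (hSA b hbS a haA).symm
      · intro _
        show True
        trivial
    · rw [hfS a haA, hfA b hbA]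
      have haS : a ∈ S := by rw [← hmemA] at haA; exact not_not.mp (by simpa using haA)
      constructor
      · intro _
        exact hSA a haS b hbA
      · intro _
        show True
        trivial
    · rw [hfS a haA, hfS b hbA]
      have haS : a ∈ S := by rw [← hmemA] at haA; exact not_not.mp (by simpa using haA)
      have hbS : b ∈ S := by rw [← hmemA] at hbA; exact not_not.mp (by simpa using hbA)
      constructor
      · intro hfalse
        exact absurd hfalse (by show ¬ False; exact id)
      · intro hadj
        exact absurd hadj (hSind a haS b hbS)
end

section
/- Let G be a graph with a cycle C and a path P vertex-disjoint from C except that one endpoint y of P lies on C, with the other endpoint x off C. Suppose x is adjacent to two vertices x_i, x_j of C distinct from y, and let a_i (resp. a_j) be the neighbor of x_i (resp. x_j) on C in the arcs between consecutive neighbors. If there is a path Q from a_i to a_j internally avoiding V(C) ∪ {x}, then G has a cycle containing all vertices of C together with x (hence of length at least |C|+1). -/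
open SimpleGraph

/-- Lemma: if x is off a cycle C which traverses x_i, a_i, …, x_j, a_j, …, back to x_i
(so a_i, a_j follow x_i, x_j on C), x is adjacent to x_i and x_j, and there is a path Q
from a_i to a_j internally avoiding V(C) ∪ {x}, then G has a cycle containing all
vertices of C together with x, hence of length at least |C| + 1. -/
theorem stmt_10 {V : Type*} (G : SimpleGraph V) (x xi xj ai aj : V)
    (h1 : G.Adj xi ai) (h2 : G.Adj xj aj)
    (P1 : G.Walk ai xj) (P2 : G.Walk aj xi)
    (c : G.Walk xi xi)
    (hdecomp : c = Walk.cons h1 (P1.append (Walk.cons h2 P2)))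
    (hc : c.IsCycle) (hx : x ∉ c.support)
    (hxi : G.Adj x xi) (hxj : G.Adj x xj)
    (Q : G.Walk ai aj) (hQ : Q.IsPath)
    (hQavoid : ∀ u ∈ Q.support, u ≠ ai → u ≠ aj → u ∉ c.support ∧ u ≠ x) :
    ∃ (u : V) (c' : G.Walk u u), c'.IsCycle ∧
      (∀ a ∈ c.support, a ∈ c'.support) ∧ x ∈ c'.support ∧
      c.length + 1 ≤ c'.length := by
  subst hdecomp
  rw [Walk.cons_isCycle_iff] at hc
  obtain ⟨hpath, _⟩ := hc
  have hsupp : (P1.append (Walk.cons h2 P2)).support = P1.support ++ P2.support := by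
    rw [Walk.support_append, Walk.support_cons, List.tail_cons]
  have hnd : (P1.support ++ P2.support).Nodup := by
    rw [← hsupp]; exact hpath.support_nodup
  rw [List.nodup_append] at hnd
  obtain ⟨hnd1, hnd2, hdisj⟩ := hnd
  have hcsupp : (Walk.cons h1 (P1.append (Walk.cons h2 P2))).support
      = xi :: (P1.support ++ P2.support) := by
    rw [Walk.support_cons, hsupp]
  rw [hcsupp] at hx hQavoid ⊢
  -- basic membership facts
  have hai1 : ai ∈ P1.support := P1.start_mem_support
  have hxj1 : xj ∈ P1.support := P1.end_mem_support
  have haj2 : aj ∈ P2.support := P2.start_mem_support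
  have hxi2 : xi ∈ P2.support := P2.end_mem_support
  have hxne : x ≠ xi ∧ x ∉ P1.support ∧ x ∉ P2.support := by
    simp only [List.mem_cons, List.mem_append] at hx
    push_neg at hx
    exact ⟨hx.1, hx.2.1, hx.2.2⟩
  have hne : ai ≠ aj := fun h => hdisj ai hai1 aj haj2 h
  have hxQ : x ∉ Q.support := by
    intro hmem
    by_cases h : x = ai
    · exact hxne.2.1 (h ▸ hai1)
    by_cases h' : x = aj
    · exact hxne.2.2 (h' ▸ haj2)
    exact (hQavoid x hmem h h').2 rfl
  -- members of Q.support.tail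
  have hQtail : ∀ b ∈ Q.support.tail,
      b = aj ∨ (b ∉ P1.support ∧ b ∉ P2.support ∧ b ≠ xi) := by
    intro b hb
    have hbQ : b ∈ Q.support := by
      rw [Q.support_eq_cons]; exact List.mem_cons_of_mem _ hb
    have hbai : b ≠ ai := by
      intro h; subst h
      have := hQ.support_nodup
      rw [Q.support_eq_cons] at this
      exact (List.nodup_cons.mp this).1 hb
    by_cases h' : b = aj
    · exact Or.inl h'
    · right
      have := (hQavoid b hbQ hbai h').1
      simp only [List.mem_cons, List.mem_append] at this
      push_neg at this
      exact ⟨this.2.1, this.2.2, this.1⟩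
  -- the new cycle
  set W : G.Walk xj xi := P1.reverse.append (Q.append P2) with hW
  have hWsupp : W.support = P1.support.reverse ++ (Q.support.tail ++ P2.support.tail) := by
    rw [hW, Walk.support_append, Walk.support_reverse, Walk.support_append,
      Q.support_eq_cons]
    simp
  refine ⟨xi, Walk.cons hxi.symm (Walk.cons hxj W), ?_, ?_, ?_, ?_⟩
  · rw [Walk.cons_isCycle_iff]
    constructor
    · rw [Walk.isPath_def, Walk.support_cons, hWsupp]
      have hQtnd' : ai ∉ Q.support.tail ∧ Q.support.tail.Nodup := by
        have := hQ.support_nodup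
        rw [Q.support_eq_cons, List.nodup_cons] at this
        exact this
      have hnd2' : aj ∉ P2.support.tail ∧ P2.support.tail.Nodup := by
        have := hnd2
        rw [P2.support_eq_cons, List.nodup_cons] at this
        exact this
      refine List.nodup_cons.2 ⟨?_, ?_⟩
      · simp only [List.mem_append, List.mem_reverse]
        rintro (h | h | h)
        · exact hxne.2.1 h
        · exact hxQ (by rw [Q.support_eq_cons]; exact List.mem_cons_of_mem _ h)
        · exact hxne.2.2 (List.mem_of_mem_tail h)
      · rw [List.nodup_append]
        refine ⟨List.nodup_reverse.mpr hnd1, ?_, ?_⟩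
        · rw [List.nodup_append]
          refine ⟨hQtnd'.2, hnd2'.2, ?_⟩
          · intro b hb b' hb2 hbb; subst hbb
            rcases hQtail b hb with h | h
            · subst h
              exact hnd2'.1 hb2
            · exact h.2.1 (List.mem_of_mem_tail hb2)
        · intro b hb b' hb2 hbb; subst hbb
          rw [List.mem_reverse] at hb
          rw [List.mem_append] at hb2
          rcases hb2 with hb2 | hb2
          · rcases hQtail b hb2 with h | h
            · exact hdisj aj (h ▸ hb) aj haj2 rfl
            · exact h.1 hb
          · exact hdisj _ hb _ (List.mem_of_mem_tail hb2) rfl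
    · intro hmem
      rw [Walk.edges_cons, List.mem_cons] at hmem
      rcases hmem with hmem | hmem
      · rw [Sym2.eq_iff] at hmem
        rcases hmem with ⟨h, _⟩ | ⟨h, _⟩
        · exact hxne.1 h.symm
        · exact hdisj xi (h ▸ hxj1) xi hxi2 rfl
      · have : x ∈ W.support := Walk.snd_mem_support_of_mem_edges W hmem
        rw [hWsupp] at this
        simp only [List.mem_append, List.mem_reverse] at this
        rcases this with h | h | h
        · exact hxne.2.1 h
        · exact hxQ (by rw [Q.support_eq_cons]; exact List.mem_cons_of_mem _ h)
        · exact hxne.2.2 (List.mem_of_mem_tail h)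
  · intro a ha
    simp only [Walk.support_cons, hWsupp, List.mem_cons, List.mem_append,
      List.mem_reverse] at ha ⊢
    rcases ha with ha | ha | ha
    · exact Or.inl ha
    · exact Or.inr (Or.inr (Or.inl ha))
    · rw [P2.support_eq_cons, List.mem_cons] at ha
      rcases ha with ha | ha
      · subst ha
        refine Or.inr (Or.inr (Or.inr (Or.inl ?_)))
        have := Q.end_mem_support
        rw [Q.support_eq_cons, List.mem_cons] at this
        exact this.resolve_left (Ne.symm hne)
      · exact Or.inr (Or.inr (Or.inr (Or.inr ha)))
  · simp [Walk.support_cons]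
  · have hQlen : 1 ≤ Q.length := by
      cases Q with
      | nil => exact absurd rfl hne
      | cons h p => simp [Walk.length_cons]
    simp only [Walk.length_cons, Walk.length_append, Walk.length_reverse, hW]
    omega
end

section
/- Let G be a simple 2-connected graph with minimum degree δ that is not Hamiltonian and has no cycle of length at least 2δ+1. Let C be a cycle of length 2δ in G, let x ∉ V(C), and suppose N(x) ⊆ V(C) with |N(x)| = k+1. Then δ = k+1, i.e., x is adjacent to exactly δ vertices of C. -/
open SimpleGraph

private lemma dart_getVert_mem {V : Type*} {G : SimpleGraph V} {u w : V}
    (p : G.Walk u w) : ∀ {i : ℕ} (hi : i < p.length),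
    (⟨(p.getVert i, p.getVert (i+1)), p.adj_getVert_succ hi⟩ : G.Dart) ∈ p.darts := by
  induction p with
  | nil => intro i hi; simp at hi
  | cons h q ih =>
    intro i hi
    rw [SimpleGraph.Walk.darts_cons]
    rw [List.mem_cons]
    cases i with
    | zero =>
      left
      apply SimpleGraph.Dart.ext
      simp
    | succ j =>
      right
      have hj : j < q.length := by
        simpa [SimpleGraph.Walk.length_cons, Nat.succ_lt_succ_iff] using hi
      have := ih hj
      convert this using 2
      simp [SimpleGraph.Walk.getVert_cons_succ]

private lemma ext_cycle {V : Type*} [DecidableEq V] {G : SimpleGraph V} {v x : V}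
    (c : G.Walk v v) (hc : c.IsCycle) (hx : x ∉ c.support) {i : ℕ} (hi : i < c.length)
    (h1 : G.Adj x (c.getVert i)) (h2 : G.Adj x (c.getVert (i+1))) :
    ∃ (w : V) (q : G.Walk w w), q.IsCycle ∧ q.length = c.length + 1 := by
  classical
  set y := c.getVert i with hy
  set z := c.getVert (i+1) with hz
  have hyz : G.Adj y z := c.adj_getVert_succ hi
  have hymem : y ∈ c.support := by
    rw [SimpleGraph.Walk.mem_support_iff_exists_getVert]
    exact ⟨i, rfl, hi.le⟩
  set c' := c.rotate y hymem with hc'def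
  have hc' : c'.IsCycle := hc.rotate hymem
  have hdperm : c'.darts ~r c.darts := c.rotate_darts y hymem
  have hlenc' : c'.length = c.length := by
    have h1 := hdperm.perm.length_eq
    rwa [SimpleGraph.Walk.length_darts, SimpleGraph.Walk.length_darts] at h1
  have hxy : x ≠ y := fun h => hx (h ▸ hymem)
  have hxs : x ∉ c'.support := by
    intro hmem
    rw [c'.support_eq_cons, List.mem_cons] at hmem
    rcases hmem with h | h
    · exact hxy h
    · have := (c.support_rotate y hymem).perm.mem_iff.mp h
      exact hx (List.mem_of_mem_tail this)
  -- destructure c'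
  have hnotnil : ¬ c'.Nil := by
    rw [SimpleGraph.Walk.not_nil_iff_lt_length, hlenc']
    omega
  obtain ⟨b, hab, q, hceq⟩ := SimpleGraph.Walk.not_nil_iff.mp hnotnil
  rw [hceq] at hc' hdperm hlenc' hxs
  -- the dart (y, z) is in the darts of the rotated cycle
  have hdmem : (⟨(y, z), hyz⟩ : G.Dart) ∈ (SimpleGraph.Walk.cons hab q).darts := by
    apply hdperm.perm.symm.subset
    exact dart_getVert_mem c hi
  -- show z = b
  have hqnodup : q.support.Nodup := by
    have := hc'.support_nodup
    rwa [SimpleGraph.Walk.support_cons, List.tail_cons] at this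
  have hzb : z = b := by
    rw [SimpleGraph.Walk.darts_cons, List.mem_cons] at hdmem
    rcases hdmem with h | h
    · exact congrArg (·.snd) h
    · exfalso
      have hfst : y ∈ q.darts.map (·.fst) := List.mem_map_of_mem h
      rw [SimpleGraph.Walk.map_fst_darts] at hfst
      -- y is the last vertex of q; nodup means y ∉ dropLast
      have hlast : q.support.getLast (q.support_ne_nil) = y := q.getLast_support
      have := List.dropLast_append_getLast (q.support_ne_nil)
      rw [hlast] at this
      have hnd : (q.support.dropLast ++ [y]).Nodup := by rw [this]; exact hqnodup
      rw [List.nodup_append] at hnd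
      exact hnd.2.2 y hfst y (List.mem_singleton_self y) rfl
  subst hzb
  have hxq : x ∉ q.support := fun h => hxs (by simp [SimpleGraph.Walk.support_cons, h])
  -- build the new cycle y - x - z - ... - y
  refine ⟨y, SimpleGraph.Walk.cons h1.symm (SimpleGraph.Walk.cons h2 q), ?_, ?_⟩
  · have hqtrail : q.edges.Nodup := by
      have := hc'.isTrail.edges_nodup
      rw [SimpleGraph.Walk.edges_cons, List.nodup_cons] at this
      exact this.2
    constructor
    · constructor
      · rw [SimpleGraph.Walk.isTrail_def]
        simp only [SimpleGraph.Walk.edges_cons, List.nodup_cons, List.mem_cons]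
        refine ⟨?_, ?_, hqtrail⟩
        · push_neg
          constructor
          · intro hcontra
            rw [Sym2.eq_iff] at hcontra
            rcases hcontra with ⟨h1', _⟩ | ⟨h1', _⟩
            · exact hxy h1'.symm
            · exact hyz.ne h1'
          · intro hcontra
            exact hxq (q.fst_mem_support_of_mem_edges (by rwa [Sym2.eq_swap] at hcontra))
        · intro hcontra
          exact hxq (q.fst_mem_support_of_mem_edges hcontra)
      · simp
    · simp only [SimpleGraph.Walk.support_cons, List.tail_cons, List.nodup_cons]
      exact ⟨hxq, hqnodup⟩
  · have : (SimpleGraph.Walk.cons hab q).length = c.length := hlenc'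
    rw [SimpleGraph.Walk.length_cons] at this
    simp only [SimpleGraph.Walk.length_cons]
    omega

/-- In a 2-connected non-Hamiltonian graph with minimum degree δ and no cycle of length
at least 2δ+1, a vertex x off a 2δ-cycle C with all neighbors on C has degree
exactly δ. -/
theorem stmt_14 {V : Type*} [Fintype V] [DecidableEq V] (G : SimpleGraph V) [DecidableRel G.Adj]
    (h2 : TwoConnected G) (hnh : ¬ G.IsHamiltonian)
    (hnc : ¬ ∃ (v : V) (c : G.Walk v v), c.IsCycle ∧ 2 * G.minDegree + 1 ≤ c.length)
    {v : V} (c : G.Walk v v) (hc : c.IsCycle) (hlen : c.length = 2 * G.minDegree)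
    (x : V) (hx : x ∉ c.support) (hnbr : ∀ y, G.Adj x y → y ∈ c.support) :
    G.degree x = G.minDegree := by
  classical
  set n := c.length with hn
  have hn3 : 3 ≤ n := hc.three_le_length
  have hnpos : 0 < n := by omega
  haveI : NeZero n := ⟨by omega⟩
  -- key: no two cyclically consecutive vertices of c are both neighbors of x
  have key : ∀ i : ℕ, i < n → ¬ (G.Adj x (c.getVert i) ∧ G.Adj x (c.getVert (i+1))) := by
    rintro i hi ⟨hA, hB⟩
    obtain ⟨w, q, hq, hqlen⟩ := ext_cycle c hc hx hi hA hB
    exact hnc ⟨w, q, hq, by omega⟩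
  set S : Finset (Fin n) := Finset.univ.filter (fun i : Fin n => G.Adj x (c.getVert i)) with hS
  -- degree x ≤ |S|
  have hsub : G.neighborFinset x ⊆ S.image (fun i : Fin n => c.getVert i) := by
    intro y hy
    rw [SimpleGraph.mem_neighborFinset] at hy
    obtain ⟨j, hj1, hj2⟩ := SimpleGraph.Walk.mem_support_iff_exists_getVert.mp (hnbr y hy)
    refine Finset.mem_image.mpr ⟨⟨j % n, Nat.mod_lt _ hnpos⟩, ?_, ?_⟩
    · rw [hS, Finset.mem_filter]
      refine ⟨Finset.mem_univ _, ?_⟩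
      show G.Adj x (c.getVert (j % n))
      rcases Nat.lt_or_ge j n with h | h
      · rwa [Nat.mod_eq_of_lt h, hj1]
      · have hjn : j = n := le_antisymm hj2 h
        subst hjn
        have hyv : y = v := by
          rw [hn] at hj1
          exact hj1.symm.trans c.getVert_length
        rw [Nat.mod_self, c.getVert_zero, ← hyv]
        exact hy
    · show c.getVert (j % n) = y
      rcases Nat.lt_or_ge j n with h | h
      · rw [Nat.mod_eq_of_lt h]; exact hj1
      · have hjn : j = n := le_antisymm hj2 h
        subst hjn
        have hyv : y = v := by
          rw [hn] at hj1
          exact hj1.symm.trans c.getVert_length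
        rw [Nat.mod_self, c.getVert_zero, hyv]
  have hdegS : G.degree x ≤ S.card := by
    rw [← SimpleGraph.card_neighborFinset_eq_degree]
    exact (Finset.card_le_card hsub).trans (Finset.card_image_le)
  -- |S| ≤ minDegree via shifting
  have hshift : Disjoint S (S.image (fun i : Fin n => i + 1)) := by
    rw [Finset.disjoint_right]
    rintro j hj hjS
    obtain ⟨i, hiS, rfl⟩ := Finset.mem_image.mp hj
    rw [hS, Finset.mem_filter] at hiS hjS
    have hAdj1 : G.Adj x (c.getVert i) := hiS.2
    have hAdj2 : G.Adj x (c.getVert ((i : ℕ) + 1)) := by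
      have hcoe : ((i + 1 : Fin n) : ℕ) = ((i : ℕ) + 1) % n := by
        rw [Fin.add_def]
        show ((i : ℕ) + ((1 : Fin n) : ℕ)) % n = ((i : ℕ) + 1) % n
        rw [Fin.val_one' n, Nat.mod_eq_of_lt (show 1 < n by omega)]
      rcases Nat.lt_or_ge ((i : ℕ) + 1) n with h | h
      · rw [hcoe, Nat.mod_eq_of_lt h] at hjS
        exact hjS.2
      · have hieq : (i : ℕ) + 1 = n := by have := i.isLt; omega
        rw [hcoe, hieq, Nat.mod_self] at hjS
        have : c.getVert ((i : ℕ) + 1) = c.getVert 0 := by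
          rw [hieq, c.getVert_zero, hn, c.getVert_length]
        rw [this]
        exact hjS.2
    exact key i i.isLt ⟨hAdj1, hAdj2⟩
  have hcardim : (S.image (fun i : Fin n => i + 1)).card = S.card :=
    Finset.card_image_of_injective S (add_left_injective 1)
  have hunion : S.card + S.card ≤ n := by
    have := Finset.card_union_of_disjoint hshift
    have hle : (S ∪ S.image (fun i : Fin n => i + 1)).card ≤ Fintype.card (Fin n) :=
      Finset.card_le_univ _
    rw [this, hcardim] at hle
    simpa using hle
  have hSle : S.card ≤ G.minDegree := by omega
  exact le_antisymm (hdegS.trans hSle) (G.minDegree_le_degree x)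
end
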